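/- arXiv:1804.01859 — 8 statements merged into one kernel-verified Lean document; each statement's English description precedes it below -/
import Mathlib

section
/- Let V = {1,…,n} and let λ = (λ_1,…,λ_k) be an integer sequence with 0 < λ_1 < ⋯ < λ_k ≤ n. The symmetric hypergraph 𝓗(λ) is minimal transversal-free if and only if both (i) λ_{i+1} − λ_i ≤ λ_1 for all i = 1,…,k−1, and (ii) λ_1 + λ_k = n. -/
open Finset

/-- An `H`-move in hypergraph NIM: strictly decrease every pile in `H`, keep others. -/
def HMove {n : ℕ} (H : Finset (Fin n)) (x x' : Fin n → ℕ) : Prop :=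
  (∀ i ∈ H, x' i < x i) ∧ ∀ i ∉ H, x' i = x i

/-- A move in `NIM_𝓗`: an `H`-move for some hyperedge `H ∈ 𝓗`. -/
def Move {n : ℕ} (F : Set (Finset (Fin n))) (x x' : Fin n → ℕ) : Prop :=
  ∃ H ∈ F, HMove H x x'

/-- Minimal excludant of a set of naturals. -/
noncomputable def mex (S : Set ℕ) : ℕ := sInf {g : ℕ | g ∉ S}

/-- The Sprague–Grundy function of `NIM_𝓗`, defined by well-founded recursion.
(The guard `∑ x' < ∑ x` is automatic whenever `∅ ∉ 𝓗`.) -/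
noncomputable def grundy {n : ℕ} (F : Set (Finset (Fin n))) (x : Fin n → ℕ) : ℕ :=
  mex {g : ℕ | ∃ x', ∃ _h : Move F x x' ∧ (∑ i, x' i) < ∑ i, x i, grundy F x' = g}
termination_by ∑ i, x i
decreasing_by exact _h.2

/-- `N` consecutive moves are possible from `x`: there are hyperedges `H¹,…,H^N ∈ 𝓗`
whose partial sums of characteristic vectors stay `≤ x`. -/
def TetrisReach {n : ℕ} (F : Set (Finset (Fin n))) (x : Fin n → ℕ) (N : ℕ) : Prop :=
  ∃ f : ℕ → Finset (Fin n), (∀ j < N, f j ∈ F) ∧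
    ∀ j < N, ∀ i, (∑ l ∈ Finset.range (j + 1), if i ∈ f l then 1 else 0) ≤ x i

/-- The Tetris function: the largest `N` with `TetrisReach`. -/
noncomputable def tetris {n : ℕ} (F : Set (Finset (Fin n))) (x : Fin n → ℕ) : ℕ :=
  sSup {N | TetrisReach F x N}

/-- `m(x)`: the minimum pile size. -/
noncomputable def mval {n : ℕ} (x : Fin n → ℕ) : ℕ := sInf (Set.range x)

/-- `y_𝓗(x) = 𝒯_𝓗(x − m(x)e) + 1`. -/
noncomputable def yval {n : ℕ} (F : Set (Finset (Fin n))) (x : Fin n → ℕ) : ℕ :=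
  tetris F (fun i => x i - mval x) + 1

/-- `v_𝓗(x)`. -/
noncomputable def vval {n : ℕ} (F : Set (Finset (Fin n))) (x : Fin n → ℕ) : ℕ :=
  Nat.choose (yval F x) 2 + ((mval x - Nat.choose (yval F x) 2 - 1) % yval F x)

/-- A position is long if `m(x) ≤ C(y_𝓗(x), 2)`. -/
noncomputable def IsLong {n : ℕ} (F : Set (Finset (Fin n))) (x : Fin n → ℕ) : Prop :=
  mval x ≤ Nat.choose (yval F x) 2

/-- The Jenkyns–Mayberry function `𝒰_𝓗`. -/
noncomputable def jmU {n : ℕ} (F : Set (Finset (Fin n))) (x : Fin n → ℕ) : ℕ :=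
  if mval x ≤ Nat.choose (yval F x) 2 then tetris F x else vval F x

/-- `𝓗` is a JM hypergraph if its SG function is given by the JM formula. -/
def IsJM {n : ℕ} (F : Set (Finset (Fin n))) : Prop :=
  ∀ x : Fin n → ℕ, grundy F x = jmU F x

/-- `T` is a transversal of `𝓗` if it meets every hyperedge. -/
def IsTransversal {n : ℕ} (F : Set (Finset (Fin n))) (T : Finset (Fin n)) : Prop :=
  ∀ H ∈ F, (T ∩ H).Nonempty

/-- `𝓗` is transversal-free if no hyperedge is a transversal. -/
def TransversalFree {n : ℕ} (F : Set (Finset (Fin n))) : Prop :=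
  ∀ H ∈ F, ¬ IsTransversal F H

/-- The induced subhypergraph `𝓗_S`. -/
def inducedH {n : ℕ} (F : Set (Finset (Fin n))) (S : Finset (Fin n)) : Set (Finset (Fin n)) :=
  {H | H ∈ F ∧ H ⊆ S}

/-- `𝓗` is minimal transversal-free. -/
def MinTransversalFree {n : ℕ} (F : Set (Finset (Fin n))) : Prop :=
  TransversalFree F ∧
    ∀ S : Finset (Fin n), S ⊂ Finset.univ → (inducedH F S).Nonempty →
      ¬ TransversalFree (inducedH F S)

/-- The symmetric hypergraph `𝓗(λ)` of a spectrum `λ₁ < ⋯ < λ_k` (1-indexed). -/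
def Hlambda {n : ℕ} (k : ℕ) (gl : ℕ → ℕ) : Set (Finset (Fin n)) :=
  {H | ∃ j, 1 ≤ j ∧ j ≤ k ∧ H.card = gl j}

section AuxJM

variable {n k : ℕ} {gl : ℕ → ℕ}

lemma gl_mono_aux (hmono : ∀ i, 1 ≤ i → i < k → gl i < gl (i + 1)) :
    ∀ i j, 1 ≤ i → i ≤ j → j ≤ k → gl i ≤ gl j := by
  intro i j hi hij hjk
  induction j, hij using Nat.le_induction with
  | base => exact le_rfl
  | succ j hij ih =>
    exact (ih (Nat.le_of_succ_le hjk)).trans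
      (le_of_lt (hmono j (le_trans hi hij) hjk))

lemma inter_nonempty_aux (S A B : Finset (Fin n)) (hA : A ⊆ S) (hB : B ⊆ S)
    (h : S.card < A.card + B.card) : (A ∩ B).Nonempty := by
  rw [← Finset.card_pos]
  have h1 : (A ∪ B).card ≤ S.card := Finset.card_le_card (Finset.union_subset hA hB)
  have h2 : (A ∪ B).card + (A ∩ B).card = A.card + B.card :=
    Finset.card_union_add_card_inter A B
  omega

lemma trans_char_aux (hk : 1 ≤ k) (hmono : ∀ i, 1 ≤ i → i < k → gl i < gl (i + 1))
    (S H : Finset (Fin n)) (hHS : H ⊆ S) :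
    IsTransversal (inducedH (Hlambda (n := n) k gl) S) H ↔ S.card < gl 1 + H.card := by
  constructor
  · intro ht
    by_contra hle
    push_neg at hle
    have hcard : gl 1 ≤ (S \ H).card := by
      rw [Finset.card_sdiff_of_subset hHS]
      have := Finset.card_le_card hHS
      omega
    obtain ⟨H', hH'sub, hH'card⟩ := Finset.exists_subset_card_eq hcard
    have hH'F : H' ∈ Hlambda (n := n) k gl := ⟨1, le_rfl, hk, hH'card⟩
    obtain ⟨x, hx⟩ := ht H' ⟨hH'F, hH'sub.trans Finset.sdiff_subset⟩
    rw [Finset.mem_inter] at hx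
    exact (Finset.mem_sdiff.mp (hH'sub hx.2)).2 hx.1
  · rintro hlt H' ⟨⟨j, hj1, hjk, hcard⟩, hH'S⟩
    apply inter_nonempty_aux S H H' hHS hH'S
    have h1j : gl 1 ≤ gl j := gl_mono_aux hmono 1 j le_rfl hj1 hjk
    omega

lemma tf_char_aux (hk : 1 ≤ k) (hmono : ∀ i, 1 ≤ i → i < k → gl i < gl (i + 1))
    (S : Finset (Fin n)) :
    TransversalFree (inducedH (Hlambda (n := n) k gl) S) ↔
      ∀ j, 1 ≤ j → j ≤ k → gl j ≤ S.card → gl 1 + gl j ≤ S.card := by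
  constructor
  · intro htf j hj1 hjk hjs
    obtain ⟨H, hHS, hHcard⟩ := Finset.exists_subset_card_eq hjs
    have hHF : H ∈ Hlambda (n := n) k gl := ⟨j, hj1, hjk, hHcard⟩
    have := htf H ⟨hHF, hHS⟩
    rw [trans_char_aux hk hmono S H hHS] at this
    omega
  · rintro h H ⟨⟨j, hj1, hjk, hc⟩, hHS⟩
    rw [trans_char_aux hk hmono S H hHS]
    have hjs : gl j ≤ S.card := hc ▸ Finset.card_le_card hHS
    have := h j hj1 hjk hjs
    omega

lemma induced_univ_aux (F : Set (Finset (Fin n))) : inducedH F Finset.univ = F := by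
  ext H; simp [inducedH]

end AuxJM

/-- Theorem 2: `𝓗(λ)` is minimal transversal-free iff
(i) `λ_{i+1} − λ_i ≤ λ_1` for all `i < k` and (ii) `λ_1 + λ_k = n`. -/
theorem Hlambda_minTransversalFree_iff
    (n k : ℕ) (gl : ℕ → ℕ) (hk : 1 ≤ k) (hpos : 0 < gl 1)
    (hmono : ∀ i, 1 ≤ i → i < k → gl i < gl (i + 1)) (hle : gl k ≤ n) :
    MinTransversalFree (Hlambda (n := n) k gl) ↔
      ((∀ i, 1 ≤ i → i < k → gl (i + 1) - gl i ≤ gl 1) ∧ gl 1 + gl k = n) := by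
  have hcardu : (Finset.univ : Finset (Fin n)).card = n := by simp
  constructor
  · rintro ⟨htf, hmin⟩
    have htf' : TransversalFree (inducedH (Hlambda (n := n) k gl) Finset.univ) := by
      rwa [induced_univ_aux]
    rw [tf_char_aux hk hmono] at htf'
    rw [hcardu] at htf'
    have hPkn : gl 1 + gl k ≤ n := htf' k hk le_rfl hle
    have hnotP : ∀ s, gl 1 ≤ s → s < n →
        ∃ j, 1 ≤ j ∧ j ≤ k ∧ gl j ≤ s ∧ s < gl 1 + gl j := by
      intro s hs1 hsn
      obtain ⟨S, -, hScard⟩ := Finset.exists_subset_card_eq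
        (show s ≤ (Finset.univ : Finset (Fin n)).card by omega)
      have hSsub : S ⊂ Finset.univ := Finset.ssubset_univ_iff.mpr (by
        intro h; rw [h, hcardu] at hScard; omega)
      have hne : (inducedH (Hlambda (n := n) k gl) S).Nonempty := by
        obtain ⟨H, hH, hHc⟩ := Finset.exists_subset_card_eq
          (show gl 1 ≤ S.card by omega)
        exact ⟨H, ⟨1, le_rfl, hk, hHc⟩, hH⟩
      have hnt := hmin S hSsub hne
      rw [tf_char_aux hk hmono] at hnt
      push_neg at hnt
      obtain ⟨j, hj1, hjk, hjs, hgt⟩ := hnt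
      exact ⟨j, hj1, hjk, by omega, by omega⟩
    constructor
    · intro i hi1 hik
      by_contra hgap
      push_neg at hgap
      have hii : gl i < gl (i + 1) := hmono i hi1 hik
      have h1i : gl 1 ≤ gl i := gl_mono_aux hmono 1 i le_rfl hi1 (le_of_lt hik)
      have hik' : gl (i + 1) ≤ gl k := gl_mono_aux hmono (i + 1) k (by omega) hik le_rfl
      obtain ⟨j, hj1, hjk, hjle, hjgt⟩ := hnotP (gl (i + 1) - 1) (by omega) (by omega)
      have hji : j ≤ i := by
        by_contra hji
        push_neg at hji
        have := gl_mono_aux hmono (i + 1) j (by omega) hji hjk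
        omega
      have := gl_mono_aux hmono j i hj1 hji (le_of_lt hik)
      omega
    · by_contra hne
      have hlt : gl 1 + gl k < n := by omega
      have h1k : gl 1 ≤ gl k := gl_mono_aux hmono 1 k le_rfl hk le_rfl
      obtain ⟨j, hj1, hjk, hjle, hjgt⟩ := hnotP (n - 1) (by omega) (by omega)
      have := gl_mono_aux hmono j k hj1 hjk le_rfl
      omega
  · rintro ⟨hgap, hsum⟩
    constructor
    · have : TransversalFree (inducedH (Hlambda (n := n) k gl) Finset.univ) := by
        rw [tf_char_aux hk hmono]
        intro j hj1 hjk _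
        have := gl_mono_aux hmono j k hj1 hjk le_rfl
        rw [hcardu]; omega
      rwa [induced_univ_aux] at this
    · intro S hSsub hne
      rw [tf_char_aux hk hmono]
      push_neg
      have hsn : S.card < n := by
        have := Finset.card_lt_card hSsub
        rw [hcardu] at this; omega
      have hs1 : gl 1 ≤ S.card := by
        obtain ⟨H, ⟨j, hj1, hjk, hc⟩, hHS⟩ := hne
        have h1 := Finset.card_le_card hHS
        have h2 := gl_mono_aux hmono 1 j le_rfl hj1 hjk
        omega
      have key : ∀ j, 1 ≤ j → j ≤ k → S.card < gl 1 + gl j →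
          ∃ j', 1 ≤ j' ∧ j' ≤ k ∧ gl j' ≤ S.card ∧ S.card < gl 1 + gl j' := by
        intro j hj1
        induction j, hj1 using Nat.le_induction with
        | base => intro hk' hlt; exact ⟨1, le_rfl, hk', by omega, hlt⟩
        | succ j hj ih =>
          intro hjk hlt
          by_cases hc : gl (j + 1) ≤ S.card
          · exact ⟨j + 1, by omega, hjk, hc, hlt⟩
          · push_neg at hc
            have hgapj := hgap j hj (by omega)
            have hmonoj := hmono j hj (by omega)
            exact ih (by omega) (by omega)
      obtain ⟨j', h1, h2, h3, h4⟩ := key k hk le_rfl (by omega)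
      exact ⟨j', h1, h2, h3, by omega⟩
end

section
/- Let V = {1,…,n} and let λ = (λ_1,…,λ_k) be an integer sequence with 0 < λ_1 < ⋯ < λ_k ≤ n. If the symmetric hypergraph 𝓗(λ) is minimal transversal-free, then λ_{i+1} − λ_i ≤ λ_1 for all i = 1,…,k−1. -/
open Finset

/-
If `λ_{i+1} - λ_i > λ_1`, take a vertex set `S` with `|S| = λ_i + λ_1 < n`. No hyperedge of size
`λ_{i+1}` or more fits into `S`, so every hyperedge `H ⊆ S` leaves at least `λ_1` vertices of `S`
outside it, and these contain a `λ_1`-edge disjoint from `H`. Thus `𝓗(λ)_S` is transversal-free,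
contradicting minimality.
-/

theorem transversalFree_iff_exists_disjoint {n : ℕ} {F : Set (Finset (Fin n))} :
    TransversalFree F ↔ ∀ H ∈ F, ∃ G ∈ F, Disjoint H G := by
  simp only [TransversalFree, IsTransversal, not_forall, exists_prop, not_nonempty_iff_eq_empty,
    disjoint_iff_inter_eq_empty]

section Hlambda

variable {n k : ℕ} {gl : ℕ → ℕ}

theorem exists_disjoint_mem_inducedH_Hlambda (hk : 1 ≤ k) {S H : Finset (Fin n)} (hHS : H ⊆ S)
    (hcard : H.card + gl 1 ≤ S.card) : ∃ G ∈ inducedH (Hlambda k gl) S, Disjoint H G := by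
  obtain ⟨G, hGS, hG⟩ := exists_subset_card_eq (s := S \ H) (n := gl 1)
    (by rw [card_sdiff_of_subset hHS]; omega)
  exact ⟨G, ⟨⟨1, le_rfl, hk, hG⟩, hGS.trans sdiff_subset⟩, disjoint_sdiff.mono_right hGS⟩

theorem transversalFree_inducedH_Hlambda (hk : 1 ≤ k) {S : Finset (Fin n)}
    (hsmall : ∀ H ∈ inducedH (Hlambda k gl) S, H.card + gl 1 ≤ S.card) :
    TransversalFree (inducedH (Hlambda k gl) S) :=
  transversalFree_iff_exists_disjoint.2 fun H hH ↦
    exists_disjoint_mem_inducedH_Hlambda hk hH.2 (hsmall H hH)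

end Hlambda

theorem Hlambda_minTransversalFree_gap_general
    (n k : ℕ) (gl : ℕ → ℕ) (hk : 1 ≤ k)
    (hmono : ∀ i, 1 ≤ i → i < k → gl i < gl (i + 1)) (hle : gl k ≤ n)
    (hmin : MinTransversalFree (Hlambda (n := n) k gl)) :
    ∀ i, 1 ≤ i → i < k → gl (i + 1) - gl i ≤ gl 1 := by
  have hgl : StrictMonoOn gl (Set.Icc 1 k) :=
    strictMonoOn_of_lt_add_one Set.ordConnected_Icc fun a _ ha ha' ↦ hmono a ha.1 ha'.2
  intro i hi hik
  by_contra! hgap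
  have hgl_succ : gl (i + 1) ≤ n :=
    (hgl.monotoneOn ⟨by omega, hik⟩ ⟨hk, le_rfl⟩ hik).trans hle
  obtain ⟨S, -, hS⟩ := exists_subset_card_eq (s := (univ : Finset (Fin n))) (n := gl i + gl 1)
    (by rw [card_univ, Fintype.card_fin]; omega)
  obtain ⟨T, hTS, hT⟩ := exists_subset_card_eq (s := S) (n := gl i) (by omega)
  refine hmin.2 S (ssubset_univ_iff.2 ?_) ⟨T, ⟨i, hi, hik.le, hT⟩, hTS⟩
    (transversalFree_inducedH_Hlambda hk fun H ⟨⟨j, hj, hjk, hH⟩, hHS⟩ ↦ ?_)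
  · rintro rfl
    rw [card_univ, Fintype.card_fin] at hS
    omega
  · have hHS_card := card_le_card hHS
    have hji : j ≤ i := by
      by_contra! hij
      have : gl (i + 1) ≤ gl j := hgl.monotoneOn ⟨by omega, hik⟩ ⟨hj, hjk⟩ hij
      omega
    have : gl j ≤ gl i := hgl.monotoneOn ⟨hj, hjk⟩ ⟨hi, hik.le⟩ hji
    omega

/-- If `𝓗(λ)` is minimal transversal-free, then `λ_{i+1} − λ_i ≤ λ_1` for all `i`. -/
theorem Hlambda_minTransversalFree_gap
    (n k : ℕ) (gl : ℕ → ℕ) (hk : 1 ≤ k) (hpos : 0 < gl 1)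
    (hmono : ∀ i, 1 ≤ i → i < k → gl i < gl (i + 1)) (hle : gl k ≤ n)
    (hmin : MinTransversalFree (Hlambda (n := n) k gl)) :
    ∀ i, 1 ≤ i → i < k → gl (i + 1) - gl i ≤ gl 1 :=
  Hlambda_minTransversalFree_gap_general n k gl hk hmono hle hmin
end

section
/- Let V = {1,…,n} and let λ = (λ_1,…,λ_k) be an integer sequence with 0 < λ_1 < ⋯ < λ_k ≤ n. If λ_{i+1} − λ_i ≤ λ_1 for all i = 1,…,k−1 and λ_1 + λ_k = n, then the symmetric hypergraph 𝓗(λ) is minimal transversal-free. -/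
open Finset

/-
Every hyperedge of `𝓗(λ)` has at most `λ_k = n - λ_1` vertices, so its complement contains a
`λ_1`-edge disjoint from it. For a proper `S` containing an edge, the gap condition shows that the
windows `[λ_j, λ_j + λ_1)` cover `[λ_1, n)`, so `|S|` lies in one of them; a `λ_j`-subset of `S`
then meets every edge inside `S`, since any two such edges have sizes summing past `|S|`.
-/

section Transversal

variable {n : ℕ} {F : Set (Finset (Fin n))}

lemma not_isTransversal_of_disjoint {T H : Finset (Fin n)} (hH : H ∈ F) (hTH : Disjoint T H) :
    ¬ IsTransversal F T := fun hT =>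
  (hT H hH).ne_empty (disjoint_iff_inter_eq_empty.mp hTH)

lemma isTransversal_inducedH_of_card_lt_card_add_card {S T : Finset (Fin n)} (hTS : T ⊆ S)
    (hcard : ∀ H ∈ F, H ⊆ S → #S < #T + #H) : IsTransversal (inducedH F S) T :=
  fun H ⟨hH, hHS⟩ => inter_nonempty_of_card_lt_card_add_card hTS hHS (hcard H hH hHS)

end Transversal

lemma exists_mem_Ico_of_sub_le {k d m : ℕ} {f : ℕ → ℕ} (hk : 1 ≤ k)
    (hgap : ∀ i, 1 ≤ i → i < k → f (i + 1) - f i ≤ d) (h1m : f 1 ≤ m) (hm : m < f k + d) :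
    ∃ j ∈ Icc 1 k, m ∈ Ico (f j) (f j + d) := by
  set j := Nat.findGreatest (fun j => f j ≤ m) k
  have hj1 : 1 ≤ j := Nat.le_findGreatest hk h1m
  have hjk : j ≤ k := Nat.findGreatest_le k
  have hjm : f j ≤ m := Nat.findGreatest_spec (P := fun j => f j ≤ m) hk h1m
  refine ⟨j, mem_Icc.mpr ⟨hj1, hjk⟩, mem_Ico.mpr ⟨hjm, ?_⟩⟩
  rcases hjk.lt_or_eq with hjk | hjk
  · have hnext : ¬ f (j + 1) ≤ m :=
      Nat.findGreatest_is_greatest (P := fun j => f j ≤ m) (Nat.lt_succ_self j) hjk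
    have := hgap j hj1 hjk
    omega
  · rwa [hjk]

section Hlambda

variable {n k : ℕ} {gl : ℕ → ℕ}

lemma exists_mem_Hlambda_subset {S : Finset (Fin n)} {j : ℕ} (hj1 : 1 ≤ j) (hjk : j ≤ k)
    (hjS : gl j ≤ #S) : ∃ H ∈ Hlambda k gl, H ⊆ S ∧ #H = gl j := by
  obtain ⟨H, hHS, hH⟩ := exists_subset_card_eq hjS
  exact ⟨H, ⟨j, hj1, hjk, hH⟩, hHS, hH⟩

lemma transversalFree_Hlambda (hsize : ∀ j, 1 ≤ j → j ≤ k → gl j + gl 1 ≤ n) :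
    TransversalFree (Hlambda (n := n) k gl) := by
  rintro H ⟨j, hj1, hjk, hH⟩
  have hcompl : gl 1 ≤ #Hᶜ := by
    rw [card_compl, Fintype.card_fin, hH]
    have := hsize j hj1 hjk
    omega
  obtain ⟨H', hH', hH'sub, -⟩ := exists_mem_Hlambda_subset le_rfl (hj1.trans hjk) hcompl
  exact not_isTransversal_of_disjoint hH' (disjoint_compl_right.mono_right hH'sub)

lemma not_transversalFree_inducedH_Hlambda (hmin : ∀ j, 1 ≤ j → j ≤ k → gl 1 ≤ gl j)
    {S : Finset (Fin n)} {j : ℕ} (hj : j ∈ Icc 1 k) (hS : #S ∈ Ico (gl j) (gl j + gl 1)) :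
    ¬ TransversalFree (inducedH (Hlambda k gl) S) := by
  obtain ⟨hj1, hjk⟩ := mem_Icc.mp hj
  obtain ⟨hjS, hSj⟩ := mem_Ico.mp hS
  obtain ⟨H, hH, hHS, hHcard⟩ := exists_mem_Hlambda_subset hj1 hjk hjS
  refine fun htf => htf H ⟨hH, hHS⟩ (isTransversal_inducedH_of_card_lt_card_add_card hHS ?_)
  rintro H' ⟨j', hj'1, hj'k, hH'⟩ -
  have := hmin j' hj'1 hj'k
  omega

end Hlambda

theorem Hlambda_minTransversalFree_of_conditions_general
    (n k : ℕ) (gl : ℕ → ℕ)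
    (hmono : ∀ i, 1 ≤ i → i < k → gl i < gl (i + 1))
    (hgap : ∀ i, 1 ≤ i → i < k → gl (i + 1) - gl i ≤ gl 1)
    (hsum : gl 1 + gl k = n) :
    MinTransversalFree (Hlambda (n := n) k gl) := by
  have hmonoOn : MonotoneOn gl (Set.Icc 1 k) :=
    monotoneOn_of_le_add_one Set.ordConnected_Icc fun i _ hi hi' =>
      (hmono i hi.1 (Nat.lt_of_succ_le hi'.2)).le
  have hbounds : ∀ j, 1 ≤ j → j ≤ k → gl 1 ≤ gl j ∧ gl j ≤ gl k := fun j hj1 hjk =>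
    ⟨hmonoOn ⟨le_rfl, hj1.trans hjk⟩ ⟨hj1, hjk⟩ hj1,
      hmonoOn ⟨hj1, hjk⟩ ⟨hj1.trans hjk, le_rfl⟩ hjk⟩
  refine ⟨transversalFree_Hlambda fun j hj1 hjk => ?_, ?_⟩
  · have := (hbounds j hj1 hjk).2
    omega
  rintro S hS ⟨H, ⟨j, hj1, hjk, hH⟩, hHS⟩
  have h1S : gl 1 ≤ #S := (hbounds j hj1 hjk).1.trans (hH ▸ card_le_card hHS)
  have hSn : #S < gl k + gl 1 := by
    simpa [← hsum, add_comm] using card_lt_card hS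
  obtain ⟨j', hj', hSj'⟩ := exists_mem_Ico_of_sub_le (hj1.trans hjk) hgap h1S hSn
  exact not_transversalFree_inducedH_Hlambda (fun i hi1 hik => (hbounds i hi1 hik).1) hj' hSj'

/-- If `λ_{i+1} − λ_i ≤ λ_1` for all `i` and `λ_1 + λ_k = n`, then `𝓗(λ)` is
minimal transversal-free. -/
theorem Hlambda_minTransversalFree_of_conditions
    (n k : ℕ) (gl : ℕ → ℕ) (hk : 1 ≤ k) (hpos : 0 < gl 1)
    (hmono : ∀ i, 1 ≤ i → i < k → gl i < gl (i + 1)) (hle : gl k ≤ n)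
    (hgap : ∀ i, 1 ≤ i → i < k → gl (i + 1) - gl i ≤ gl 1)
    (hsum : gl 1 + gl k = n) :
    MinTransversalFree (Hlambda (n := n) k gl) :=
  Hlambda_minTransversalFree_of_conditions_general n k gl hmono hgap hsum
end

section
/- Let V = {1,…,n} and let 𝓗 ⊆ 2^V be a hypergraph with 𝓗 ≠ ∅ and ∅ ∉ 𝓗. If 𝓗 is a JM hypergraph, then 𝓗 is minimal transversal-free. -/
open Finset

/-
For a JM hypergraph, a position `χ(A)` with an empty pile has `𝒢 = 𝒰 = 𝒯`, and `𝒯(χ(A)) = 0`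
exactly when `A` spans no hyperedge; moreover `𝒰(e) = 0`. So `e = χ(V)` is a P-position, and for
`A ≠ V` so is `χ(A)` iff `A` spans no hyperedge. If a hyperedge `H` were a transversal, `V ∖ H`
would span no hyperedge and the `H`-move `e → χ(V ∖ H)` would join two P-positions. If `S ⊊ V`
spans a hyperedge, `χ(S)` is an N-position; a move from it to a P-position is an `H`-move to
`χ(S ∖ H)` with `S ∖ H` hyperedge-free, i.e. `H` is a transversal of `𝓗_S`.
-/

section Game

variable {n : ℕ} {F : Set (Finset (Fin n))}

def charVec (A : Finset (Fin n)) : Fin n → ℕ := fun i => if i ∈ A then 1 else 0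

@[simp]
lemma charVec_le_charVec_iff {A B : Finset (Fin n)} : charVec A ≤ charVec B ↔ A ⊆ B := by
  refine ⟨fun h i hi => ?_, fun h i => ?_⟩
  · by_contra hiB
    simpa [charVec, hi, hiB] using h i
  · by_cases hi : i ∈ A
    · simp [charVec, hi, h hi]
    · simp [charVec, hi]

lemma hMove_charVec_iff {H A : Finset (Fin n)} {x' : Fin n → ℕ} :
    HMove H (charVec A) x' ↔ H ⊆ A ∧ x' = charVec (A \ H) := by
  constructor
  · rintro ⟨hlt, heq⟩
    have hHA : H ⊆ A := fun i hi => by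
      by_contra hiA
      simpa [charVec, hiA] using hlt i hi
    refine ⟨hHA, funext fun i => ?_⟩
    by_cases hiH : i ∈ H
    · simpa [charVec, hiH, hHA hiH] using hlt i hiH
    · simp [heq i hiH, charVec, hiH]
  · rintro ⟨hHA, rfl⟩
    exact ⟨fun i hi => by simp [charVec, hi, hHA hi], fun i hi => by simp [charVec, hi]⟩

lemma HMove.le {H : Finset (Fin n)} {x x' : Fin n → ℕ} (h : HMove H x x') : x' ≤ x := fun i => by
  by_cases hi : i ∈ H
  · exact (h.1 i hi).le
  · exact (h.2 i hi).le

lemma Move.sum_lt (hnem : ∅ ∉ F) {x x' : Fin n → ℕ} (h : Move F x x') :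
    ∑ i, x' i < ∑ i, x i := by
  obtain ⟨H, hH, hmove⟩ := h
  obtain ⟨i, hi⟩ := nonempty_iff_ne_empty.2 (ne_of_mem_of_not_mem hH hnem)
  exact sum_lt_sum (fun j _ => hmove.le j) ⟨i, mem_univ i, hmove.1 i hi⟩

lemma finite_setOf_move (x : Fin n → ℕ) : {x' | Move F x x'}.Finite :=
  (Set.finite_Iic x).subset fun _ ⟨_, _, hmove⟩ => hmove.le

lemma mex_eq_zero_iff {S : Set ℕ} (hS : S.Finite) : mex S = 0 ↔ 0 ∉ S := by
  refine ⟨fun h h0 => ?_, fun h0 => Nat.le_zero.1 (Nat.sInf_le h0)⟩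
  have hmem : mex S ∉ S := Nat.sInf_mem hS.exists_notMem
  exact hmem (h ▸ h0)

lemma grundy_eq_mex (hnem : ∅ ∉ F) (x : Fin n → ℕ) :
    grundy F x = mex (grundy F '' {x' | Move F x x'}) := by
  rw [grundy]
  congr 1
  ext g
  exact ⟨fun ⟨x', ⟨hmove, _⟩, hg⟩ => ⟨x', hmove, hg⟩,
    fun ⟨x', hmove, hg⟩ => ⟨x', ⟨hmove, hmove.sum_lt hnem⟩, hg⟩⟩

lemma grundy_eq_zero_iff (hnem : ∅ ∉ F) {x : Fin n → ℕ} :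
    grundy F x = 0 ↔ ∀ x', Move F x x' → grundy F x' ≠ 0 := by
  rw [grundy_eq_mex hnem, mex_eq_zero_iff ((finite_setOf_move x).image _)]
  simp

end Game

section Tetris

variable {n : ℕ} {F : Set (Finset (Fin n))} {x : Fin n → ℕ}

lemma TetrisReach.mono {M N : ℕ} (hMN : M ≤ N) (h : TetrisReach F x N) : TetrisReach F x M :=
  let ⟨f, hF, hle⟩ := h
  ⟨f, fun j hj => hF j (hj.trans_le hMN), fun j hj => hle j (hj.trans_le hMN)⟩

lemma tetrisReach_zero : TetrisReach F x 0 := ⟨fun _ => ∅, by simp, by simp⟩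

lemma TetrisReach.le_sum (hnem : ∅ ∉ F) {N : ℕ} (h : TetrisReach F x N) : N ≤ ∑ i, x i := by
  obtain ⟨f, hF, hle⟩ := h
  cases N with
  | zero => exact Nat.zero_le _
  | succ N =>
    calc N + 1 = ∑ _l ∈ range (N + 1), 1 := by simp
      _ ≤ ∑ l ∈ range (N + 1), (f l).card := sum_le_sum fun l hl =>
          card_pos.2 (nonempty_iff_ne_empty.2 (ne_of_mem_of_not_mem (hF l (mem_range.1 hl)) hnem))
      _ = ∑ i, ∑ l ∈ range (N + 1), if i ∈ f l then 1 else 0 := by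
          rw [sum_comm]
          simp
      _ ≤ ∑ i, x i := sum_le_sum fun i _ => hle N N.lt_succ_self i

lemma tetrisReach_one_iff : TetrisReach F x 1 ↔ ∃ H ∈ F, charVec H ≤ x := by
  simp only [TetrisReach, Nat.lt_one_iff, forall_eq, zero_add, sum_range_one]
  exact ⟨fun ⟨f, hF, hle⟩ => ⟨f 0, hF, hle⟩, fun ⟨H, hH, hle⟩ => ⟨fun _ => H, hH, hle⟩⟩

lemma tetris_eq_zero_iff (hnem : ∅ ∉ F) : tetris F x = 0 ↔ ¬ TetrisReach F x 1 := by
  refine ⟨fun h h1 => ?_, fun h => ?_⟩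
  · have hbdd : BddAbove {N | TetrisReach F x N} := ⟨∑ i, x i, fun _ hN => hN.le_sum hnem⟩
    have := le_csSup hbdd h1
    rw [← tetris, h] at this
    exact absurd this (by omega)
  · refine Nat.le_zero.1 (csSup_le ⟨0, tetrisReach_zero⟩ fun N hN => ?_)
    by_contra hpos
    exact h (hN.mono (by omega))

lemma tetris_charVec_eq_zero_iff (hnem : ∅ ∉ F) {A : Finset (Fin n)} :
    tetris F (charVec A) = 0 ↔ ∀ H ∈ F, ¬ H ⊆ A := by
  simp [tetris_eq_zero_iff hnem, tetrisReach_one_iff]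

end Tetris

section JM

variable {n : ℕ} {F : Set (Finset (Fin n))}

lemma jmU_of_apply_eq_zero {x : Fin n → ℕ} {i : Fin n} (hi : x i = 0) : jmU F x = tetris F x := by
  have hm : mval x = 0 := Nat.sInf_eq_zero.2 (Or.inl ⟨i, hi⟩)
  simp [jmU, hm]

lemma jmU_charVec_univ [Nonempty (Fin n)] (hnem : ∅ ∉ F) : jmU F (charVec univ) = 0 := by
  have hone : charVec (univ : Finset (Fin n)) = fun _ => 1 := funext fun i => by simp [charVec]
  have hm : mval (charVec (univ : Finset (Fin n))) = 1 := by
    rw [mval, hone, Set.range_const, csInf_singleton]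
  have hy : yval F (charVec univ) = 1 := by
    have hzero : (fun i => charVec univ i - mval (charVec (univ : Finset (Fin n)))) =
        charVec (∅ : Finset (Fin n)) :=
      funext fun i => by simp [hm, charVec]
    rw [yval, hzero, (tetris_charVec_eq_zero_iff hnem).2 fun H hH hsub =>
      hnem (subset_empty.1 hsub ▸ hH)]
  simp [jmU, vval, hm, hy]

lemma IsJM.grundy_charVec_univ [Nonempty (Fin n)] (hJM : IsJM F) (hnem : ∅ ∉ F) :
    grundy F (charVec univ) = 0 :=
  (hJM _).trans (jmU_charVec_univ hnem)

lemma IsJM.grundy_charVec_eq_zero_iff (hJM : IsJM F) (hnem : ∅ ∉ F) {A : Finset (Fin n)}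
    (hA : A ≠ univ) :
    grundy F (charVec A) = 0 ↔ ∀ H ∈ F, ¬ H ⊆ A := by
  obtain ⟨i, -, hi⟩ := exists_of_ssubset (ssubset_univ_iff.2 hA)
  rw [hJM, jmU_of_apply_eq_zero (i := i) (by simp [charVec, hi]), tetris_charVec_eq_zero_iff hnem]

end JM

lemma inducedH_univ {n : ℕ} (F : Set (Finset (Fin n))) : inducedH F univ = F := by
  ext H
  simp [inducedH]

lemma isTransversal_inducedH_iff {n : ℕ} {F : Set (Finset (Fin n))} {S T : Finset (Fin n)} :
    IsTransversal (inducedH F S) T ↔ ∀ H ∈ F, ¬ H ⊆ S \ T := by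
  simp only [IsTransversal, inducedH, Set.mem_ofPred_eq, and_imp, subset_sdiff,
    ← not_disjoint_iff_nonempty_inter, disjoint_comm (a := T)]
  grind

theorem isJM_imp_minTransversalFree_general
    (n : ℕ) (F : Set (Finset (Fin n))) (hnem : ∅ ∉ F)
    (hJM : IsJM F) : MinTransversalFree F := by
  refine ⟨fun H hH hT => ?_, fun S hS ⟨H₀, hH₀, hH₀S⟩ hTF => ?_⟩
  · obtain ⟨i, hi⟩ := nonempty_iff_ne_empty.2 (ne_of_mem_of_not_mem hH hnem)
    have : Nonempty (Fin n) := ⟨i⟩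
    have hmove : Move F (charVec univ) (charVec (univ \ H)) :=
      ⟨H, hH, hMove_charVec_iff.2 ⟨subset_univ H, rfl⟩⟩
    refine (grundy_eq_zero_iff hnem).1 (hJM.grundy_charVec_univ hnem) _ hmove ?_
    rw [hJM.grundy_charVec_eq_zero_iff hnem (sdiff_ssubset (subset_univ H) ⟨i, hi⟩).ne,
      ← isTransversal_inducedH_iff, inducedH_univ]
    exact hT
  · have hg : grundy F (charVec S) ≠ 0 := by
      rw [Ne, hJM.grundy_charVec_eq_zero_iff hnem hS.ne]
      exact fun h => h H₀ hH₀ hH₀S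
    rw [Ne, grundy_eq_zero_iff hnem] at hg
    push Not at hg
    obtain ⟨x', ⟨H, hH, hmove⟩, hg'⟩ := hg
    obtain ⟨hHS, rfl⟩ := hMove_charVec_iff.1 hmove
    refine hTF H ⟨hH, hHS⟩ (isTransversal_inducedH_iff.2 ?_)
    exact (hJM.grundy_charVec_eq_zero_iff hnem
      fun h => hS.ne (univ_subset_iff.1 (h ▸ sdiff_subset))).1 hg'

/-- Lemma 3: every JM hypergraph is minimal transversal-free. -/
theorem isJM_imp_minTransversalFree
    (n : ℕ) (F : Set (Finset (Fin n))) (hne : F.Nonempty) (hnem : ∅ ∉ F)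
    (hJM : IsJM F) : MinTransversalFree F :=
  isJM_imp_minTransversalFree_general n F hnem hJM
end

section
/- Let V = {1,…,n} and let 𝓗 ⊆ 2^V be a hypergraph with 𝓗 ≠ ∅ and ∅ ∉ 𝓗. For all positions x'', x' ∈ ℤ_{≥0}^V with x'' ≤ x' componentwise, the set of Tetris values {𝒯_𝓗(y) : x'' ≤ y ≤ x'} equals the full integer interval {t : 𝒯_𝓗(x'') ≤ t ≤ 𝒯_𝓗(x')}. -/
open Finset

section TetrisAux

variable {n : ℕ} {F : Set (Finset (Fin n))}

lemma reach_zero (x : Fin n → ℕ) : TetrisReach F x 0 :=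
  ⟨fun _ => ∅, fun j hj => absurd hj (Nat.not_lt_zero _),
    fun j hj => absurd hj (Nat.not_lt_zero _)⟩

lemma reach_mono_le {x : Fin n → ℕ} {N M : ℕ} (h : M ≤ N) :
    TetrisReach F x N → TetrisReach F x M := fun ⟨f, h1, h2⟩ =>
  ⟨f, fun j hj => h1 j (lt_of_lt_of_le hj h), fun j hj => h2 j (lt_of_lt_of_le hj h)⟩

lemma reach_mono_x {x x' : Fin n → ℕ} {N : ℕ} (h : x ≤ x') :
    TetrisReach F x N → TetrisReach F x' N := fun ⟨f, h1, h2⟩ =>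
  ⟨f, h1, fun j hj i => (h2 j hj i).trans (h i)⟩

lemma card_eq_sum_ite (s : Finset (Fin n)) :
    s.card = ∑ i, (if i ∈ s then 1 else 0) := by
  simp [Finset.sum_ite_mem]

lemma reach_le_sum (hnem : ∅ ∉ F) {x : Fin n → ℕ} {N : ℕ}
    (h : TetrisReach F x N) : N ≤ ∑ i, x i := by
  obtain ⟨f, h1, h2⟩ := h
  rcases Nat.eq_zero_or_pos N with h0 | h0
  · omega
  have key : ∀ i, (∑ l ∈ Finset.range N, if i ∈ f l then 1 else 0) ≤ x i := by
    intro i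
    have := h2 (N - 1) (by omega) i
    rwa [Nat.sub_add_cancel h0] at this
  calc N = ∑ _l ∈ Finset.range N, 1 := by simp
    _ ≤ ∑ l ∈ Finset.range N, (f l).card := by
        apply Finset.sum_le_sum
        intro l hl
        have hfl := h1 l (Finset.mem_range.mp hl)
        have : f l ≠ ∅ := fun he => hnem (he ▸ hfl)
        have := Finset.card_pos.mpr (Finset.nonempty_of_ne_empty this)
        omega
    _ = ∑ l ∈ Finset.range N, ∑ i, (if i ∈ f l then 1 else 0) := by
        simp only [card_eq_sum_ite]
    _ = ∑ i, ∑ l ∈ Finset.range N, (if i ∈ f l then 1 else 0) := Finset.sum_comm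
    _ ≤ ∑ i, x i := Finset.sum_le_sum fun i _ => key i

lemma reach_bddAbove (hnem : ∅ ∉ F) (x : Fin n → ℕ) :
    BddAbove {N | TetrisReach F x N} :=
  ⟨∑ i, x i, fun _ hN => reach_le_sum hnem hN⟩

lemma reach_tetris (hnem : ∅ ∉ F) (x : Fin n → ℕ) :
    TetrisReach F x (tetris F x) := by
  have h0 : (0 : ℕ) ∈ {N | TetrisReach F x N} := reach_zero x
  exact Nat.sSup_mem ⟨0, h0⟩ (reach_bddAbove hnem x)

lemma le_tetris (hnem : ∅ ∉ F) {x : Fin n → ℕ} {N : ℕ}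
    (h : TetrisReach F x N) : N ≤ tetris F x :=
  le_csSup (reach_bddAbove hnem x) h

lemma tetris_mono (hnem : ∅ ∉ F) {x x' : Fin n → ℕ} (h : x ≤ x') :
    tetris F x ≤ tetris F x' :=
  le_tetris hnem (reach_mono_x h (reach_tetris hnem x))

lemma sum_delete {α : Type*} [AddCommMonoid α] (h : ℕ → α) (j0 j : ℕ) (hj : j0 ≤ j) :
    (∑ l ∈ Finset.range (j + 1), (if l < j0 then h l else h (l + 1))) + h j0 =
      ∑ l ∈ Finset.range (j + 2), h l := by
  induction j with
  | zero =>
      have : j0 = 0 := Nat.le_zero.mp hj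
      subst this
      simp [Finset.sum_range_succ, add_comm]
  | succ j ih =>
      have e1 : (∑ l ∈ Finset.range (j + 1 + 1), (if l < j0 then h l else h (l + 1)))
          = (∑ l ∈ Finset.range (j + 1), (if l < j0 then h l else h (l + 1)))
            + (if j + 1 < j0 then h (j + 1) else h (j + 2)) :=
        Finset.sum_range_succ _ _
      have e2 : (∑ l ∈ Finset.range (j + 1 + 2), h l)
          = (∑ l ∈ Finset.range (j + 2), h l) + h (j + 2) :=
        Finset.sum_range_succ _ _
      rw [e1, e2]
      rcases Nat.lt_or_ge j0 (j + 1) with hlt | hge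
      · rw [if_neg (by omega), ← ih (by omega)]
        abel
      · have hj0 : j0 = j + 1 := by omega
        subst hj0
        rw [if_neg (by omega)]
        have hcongr : (∑ l ∈ Finset.range (j + 1), (if l < j + 1 then h l else h (l + 1)))
            = ∑ l ∈ Finset.range (j + 1), h l :=
          Finset.sum_congr rfl fun l hl => if_pos (Finset.mem_range.mp hl)
        have e3 : (∑ l ∈ Finset.range (j + 2), h l)
            = (∑ l ∈ Finset.range (j + 1), h l) + h (j + 1) :=
          Finset.sum_range_succ _ _
        rw [hcongr, e3]
        abel

lemma reach_update {x : Fin n → ℕ} {i : Fin n} {N : ℕ}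
    (h : TetrisReach F (Function.update x i (x i + 1)) N) :
    TetrisReach F x (N - 1) := by
  obtain ⟨f, h1, h2⟩ := h
  have hz : ∀ i', Function.update x i (x i + 1) i' = if i' = i then x i + 1 else x i' := by
    intro i'; simp [Function.update_apply]
  by_cases hS : ∃ j, j < N ∧ i ∈ f j
  · -- delete the last occurrence
    set S := (Finset.range N).filter (fun j => i ∈ f j) with hSdef
    have hSne : S.Nonempty := by
      obtain ⟨j, hj1, hj2⟩ := hS
      exact ⟨j, by simp [hSdef, hj1, hj2]⟩
    set j0 := S.max' hSne with hj0def
    have hj0mem : j0 ∈ S := S.max'_mem hSne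
    have hj0N : j0 < N := by
      have := Finset.mem_filter.mp hj0mem
      exact Finset.mem_range.mp this.1
    have hj0i : i ∈ f j0 := (Finset.mem_filter.mp hj0mem).2
    have hj0max : ∀ j, j0 < j → j < N → i ∉ f j := by
      intro j hjj hjN hji
      have : j ∈ S := by simp [hSdef, hjN, hji]
      exact absurd (S.le_max' j this) (by omega)
    refine ⟨fun j => if j < j0 then f j else f (j + 1), ?_, ?_⟩
    · intro j hj
      show (if j < j0 then f j else f (j + 1)) ∈ F
      by_cases hlt : j < j0
      · rw [if_pos hlt]; exact h1 j (by omega)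
      · rw [if_neg hlt]; exact h1 (j + 1) (by omega)
    · intro j hj i'
      show (∑ l ∈ Finset.range (j + 1),
        if i' ∈ (if l < j0 then f l else f (l + 1)) then 1 else 0) ≤ x i'
      have hsplit : (∑ l ∈ Finset.range (j + 1),
          if i' ∈ (if l < j0 then f l else f (l + 1)) then 1 else 0)
          = ∑ l ∈ Finset.range (j + 1),
            (if l < j0 then (if i' ∈ f l then 1 else 0) else (if i' ∈ f (l + 1) then 1 else 0)) :=
        Finset.sum_congr rfl fun l _ => apply_ite (fun s => if i' ∈ s then 1 else 0) _ _ _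
      rw [hsplit]
      by_cases hcase : j < j0
      · have hcongr : (∑ l ∈ Finset.range (j + 1),
            (if l < j0 then (if i' ∈ f l then 1 else 0) else (if i' ∈ f (l + 1) then 1 else 0)))
            = ∑ l ∈ Finset.range (j + 1), (if i' ∈ f l then 1 else 0) := by
          apply Finset.sum_congr rfl
          intro l hl
          rw [if_pos (by have := Finset.mem_range.mp hl; omega : l < j0)]
        rw [hcongr]
        have hbound := h2 j (by omega) i'
        rw [hz i'] at hbound
        by_cases hii : i' = i
        · subst hii
          rw [if_pos rfl] at hbound
          -- show sum ≤ x i'; by contradiction using partial sum at j0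
          by_contra hc
          push_neg at hc
          have hb2 := h2 j0 hj0N i'
          rw [hz i', if_pos rfl] at hb2
          have hsubset : Finset.range (j + 1) ⊆ Finset.range j0 := by
            intro l hl
            simp only [Finset.mem_range] at *
            omega
          have hmono : (∑ l ∈ Finset.range (j + 1), (if i' ∈ f l then 1 else 0))
              ≤ ∑ l ∈ Finset.range j0, (if i' ∈ f l then 1 else 0) :=
            Finset.sum_le_sum_of_subset hsubset
          have : (∑ l ∈ Finset.range (j0 + 1), (if i' ∈ f l then 1 else 0))
              = (∑ l ∈ Finset.range j0, (if i' ∈ f l then 1 else 0)) + 1 := by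
            rw [Finset.sum_range_succ, if_pos hj0i]
          omega
        · rw [if_neg hii] at hbound
          exact hbound
      · -- j0 ≤ j : use sum_delete
        have hkey : (∑ l ∈ Finset.range (j + 1),
            (if l < j0 then (if i' ∈ f l then 1 else 0) else (if i' ∈ f (l + 1) then 1 else 0)))
            + (if i' ∈ f j0 then 1 else 0)
            = ∑ l ∈ Finset.range (j + 2), (if i' ∈ f l then 1 else 0) :=
          sum_delete (fun l => if i' ∈ f l then 1 else 0) j0 j (by omega)
        have hbound := h2 (j + 1) (by omega) i'
        rw [hz i'] at hbound
        have hb2 : (∑ l ∈ Finset.range (j + 2), if i' ∈ f l then 1 else 0)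
            ≤ if i' = i then x i + 1 else x i' := hbound
        by_cases hii : i' = i
        · subst hii
          rw [if_pos rfl] at hb2
          rw [if_pos hj0i] at hkey
          omega
        · rw [if_neg hii] at hb2
          have : (if i' ∈ f j0 then 1 else 0) + 0 ≥ 0 := by omega
          omega
  · -- no move uses i
    push_neg at hS
    apply reach_mono_le (Nat.sub_le N 1)
    refine ⟨f, h1, ?_⟩
    intro j hj i'
    have hbound := h2 j hj i'
    rw [hz i'] at hbound
    by_cases hii : i' = i
    · subst hii
      have : (∑ l ∈ Finset.range (j + 1), if i' ∈ f l then 1 else 0) = 0 := by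
        apply Finset.sum_eq_zero
        intro l hl
        rw [if_neg (hS l (by have := Finset.mem_range.mp hl; omega))]
      omega
    · rw [if_neg hii] at hbound
      exact hbound

lemma tetris_update_le (hnem : ∅ ∉ F) (x : Fin n → ℕ) (i : Fin n) :
    tetris F (Function.update x i (x i + 1)) ≤ tetris F x + 1 := by
  have h := reach_tetris hnem (Function.update x i (x i + 1))
  have h2 := le_tetris hnem (reach_update h)
  omega

lemma exists_tetris_val (hnem : ∅ ∉ F) (x' : Fin n → ℕ) (t : ℕ)
    (h2 : t ≤ tetris F x') :
    ∀ k (x'' : Fin n → ℕ), (∑ i, (x' i - x'' i)) = k → x'' ≤ x' → tetris F x'' ≤ t →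
      ∃ y, x'' ≤ y ∧ y ≤ x' ∧ tetris F y = t := by
  intro k
  induction k using Nat.strong_induction_on with
  | _ k ih =>
    intro x'' hk hle h1
    rcases eq_or_lt_of_le h1 with heq | hlt
    · exact ⟨x'', le_refl _, hle, heq⟩
    · have hne : ∃ i, x'' i < x' i := by
        by_contra hc
        push_neg at hc
        have hxx : x'' = x' := funext fun i => le_antisymm (hle i) (hc i)
        rw [hxx] at hlt
        omega
      obtain ⟨i, hi⟩ := hne
      set z := Function.update x'' i (x'' i + 1) with hzdef
      have hzval : ∀ i', z i' = if i' = i then x'' i + 1 else x'' i' := by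
        intro i'; simp [hzdef, Function.update_apply]
      have hz_le : z ≤ x' := by
        intro i'
        rw [hzval i']
        by_cases hii : i' = i
        · rw [if_pos hii, hii]; exact hi
        · rw [if_neg hii]; exact hle i'
      have hmeas : (∑ i', (x' i' - z i')) < k := by
        rw [← hk]
        apply Finset.sum_lt_sum
        · intro i' _
          rw [hzval i']
          by_cases hii : i' = i
          · rw [if_pos hii]; subst hii; omega
          · rw [if_neg hii]
        · exact ⟨i, Finset.mem_univ i, by rw [hzval i, if_pos rfl]; omega⟩
      have hstep : tetris F z ≤ tetris F x'' + 1 := tetris_update_le hnem x'' i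
      have hx''z : x'' ≤ z := by
        intro i'
        rw [hzval i']
        by_cases hii : i' = i
        · rw [if_pos hii, hii]; exact Nat.le_succ _
        · rw [if_neg hii]
      obtain ⟨y, hy1, hy2, hy3⟩ := ih _ hmeas z rfl hz_le (by omega)
      exact ⟨y, le_trans hx''z hy1, hy2, hy3⟩

end TetrisAux

/-- Contiguity of Tetris values: on a box `[x'', x']` the Tetris function takes
exactly the values of the interval `[𝒯(x''), 𝒯(x')]`. -/
theorem tetris_contiguity
    (n : ℕ) (F : Set (Finset (Fin n))) (hne : F.Nonempty) (hnem : ∅ ∉ F)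
    (x'' x' : Fin n → ℕ) (h : x'' ≤ x') :
    {t : ℕ | ∃ y : Fin n → ℕ, x'' ≤ y ∧ y ≤ x' ∧ tetris F y = t} =
      Set.Icc (tetris F x'') (tetris F x') := by
  ext t
  simp only [Set.mem_setOf_eq, Set.mem_Icc]
  constructor
  · rintro ⟨y, hy1, hy2, rfl⟩
    exact ⟨tetris_mono hnem hy1, tetris_mono hnem hy2⟩
  · rintro ⟨h1, h2⟩
    exact exists_tetris_val hnem x' t h2 _ x'' rfl h h1
end

section
/- Let V = {1,…,n}, let λ = (λ_1,…,λ_k) be an integer sequence with 0 < λ_1 < ⋯ < λ_k ≤ n, and let 𝓗 = 𝓗(λ). Let x ∈ ℤ_{≥0}^V be a position and let i ≠ j be indices with x_i > x_j. Define x' by x'_i = x_i − 1, x'_j = x_j + 1, and x'_ℓ = x_ℓ for all other ℓ. Then 𝒯_𝓗(x') ≥ 𝒯_𝓗(x). -/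
open Finset

/-- Inductive characterization of reachability. -/
def Reach {n : ℕ} (F : Set (Finset (Fin n))) : ℕ → (Fin n → ℕ) → Prop
  | 0, _ => True
  | (N+1), x => ∃ H ∈ F, (∀ i ∈ H, 1 ≤ x i) ∧
      Reach F N (fun i => x i - (if i ∈ H then 1 else 0))

lemma tetrisReach_iff_reach {n : ℕ} (F : Set (Finset (Fin n))) (N : ℕ) (x : Fin n → ℕ) :
    TetrisReach F x N ↔ Reach F N x := by
  induction N generalizing x with
  | zero =>
    simp only [Reach, iff_true]
    exact ⟨fun _ => ∅, fun j hj => absurd hj (Nat.not_lt_zero j),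
      fun j hj => absurd hj (Nat.not_lt_zero j)⟩
  | succ N ih =>
    constructor
    · rintro ⟨f, hf, hsum⟩
      refine ⟨f 0, hf 0 (Nat.succ_pos N), ?_, ?_⟩
      · intro i hi
        have h := hsum 0 (Nat.succ_pos N) i
        rw [Finset.sum_range_one, if_pos hi] at h
        exact h
      · rw [← ih]
        refine ⟨fun l => f (l + 1), fun l hl => hf (l + 1) (by omega), ?_⟩
        intro l hl i
        have h := hsum (l + 1) (by omega) i
        rw [Finset.sum_range_succ'] at h
        show (∑ l' ∈ Finset.range (l + 1), if i ∈ f (l' + 1) then 1 else 0) ≤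
          x i - (if i ∈ f 0 then 1 else 0)
        omega
    · rintro ⟨H, hHF, hH1, hr⟩
      rw [← ih] at hr
      obtain ⟨f, hf, hsum⟩ := hr
      refine ⟨fun l => if l = 0 then H else f (l - 1), ?_, ?_⟩
      · intro l hl
        by_cases h0 : l = 0
        · simpa [h0] using hHF
        · simpa [h0] using hf (l - 1) (by omega)
      · intro l hl i
        rcases Nat.eq_zero_or_pos l with h0 | h0
        · subst h0
          show (∑ l' ∈ Finset.range 1,
            if i ∈ (if l' = 0 then H else f (l' - 1)) then 1 else 0) ≤ x i
          rw [Finset.sum_range_one, if_pos rfl]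
          by_cases hi : i ∈ H
          · rw [if_pos hi]; exact hH1 i hi
          · rw [if_neg hi]; exact Nat.zero_le _
        · obtain ⟨m, rfl⟩ := Nat.exists_eq_add_of_lt h0
          rw [Nat.zero_add] at hl ⊢
          have h := hsum m (by omega) i
          show (∑ l' ∈ Finset.range (m + 1 + 1),
            if i ∈ (if l' = 0 then H else f (l' - 1)) then 1 else 0) ≤ x i
          rw [Finset.sum_range_succ']
          have hre : ∀ l' ∈ Finset.range (m + 1),
              (if i ∈ (if l' + 1 = 0 then H else f (l' + 1 - 1)) then (1:ℕ) else 0) =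
              (if i ∈ f l' then 1 else 0) := by
            intro l' _
            simp only [Nat.succ_ne_zero, if_false, Nat.add_sub_cancel]
          rw [Finset.sum_congr rfl hre, if_pos rfl]
          have h' : (∑ l' ∈ Finset.range (m + 1), if i ∈ f l' then (1:ℕ) else 0) ≤
              x i - (if i ∈ H then 1 else 0) := h
          by_cases hi : i ∈ H
          · have := hH1 i hi
            rw [if_pos hi] at h' ⊢
            omega
          · rw [if_neg hi] at h' ⊢
            omega

/-- The key transfer lemma for card-closed hypergraphs, in `Reach` form. -/
lemma reach_transfer {n : ℕ} (F : Set (Finset (Fin n)))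
    (hF : ∀ H ∈ F, ∀ H' : Finset (Fin n), H'.card = H.card → H' ∈ F)
    (N : ℕ) : ∀ (x : Fin n → ℕ) (i j : Fin n), i ≠ j → x j < x i →
    Reach F N x → Reach F N (fun l => if l = i then x i - 1 else if l = j then x j + 1 else x l) := by
  induction N with
  | zero => intro x i j _ _ _; trivial
  | succ N ih =>
    rintro x i j hij hx ⟨H, hHF, hH1, hr⟩
    have hji : j ≠ i := hij.symm
    by_cases hi : i ∈ H
    · by_cases hj : j ∈ H
      · -- both in H : keep H
        have hxj1 : 1 ≤ x j := hH1 j hj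
        refine ⟨H, hHF, ?_, ?_⟩
        · intro l hl
          show 1 ≤ if l = i then x i - 1 else if l = j then x j + 1 else x l
          by_cases hli : l = i
          · rw [hli, if_pos rfl]; omega
          · by_cases hlj : l = j
            · rw [hlj, if_neg hji, if_pos rfl]; omega
            · rw [if_neg hli, if_neg hlj]; exact hH1 l hl
        · have hlt : (fun l => x l - (if l ∈ H then 1 else 0)) j <
              (fun l => x l - (if l ∈ H then 1 else 0)) i := by
            show x j - (if j ∈ H then 1 else 0) < x i - (if i ∈ H then 1 else 0)
            rw [if_pos hi, if_pos hj]; omega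
          have key : Reach F N (fun l => if l = i then (x i - (if i ∈ H then 1 else 0)) - 1
              else if l = j then (x j - (if j ∈ H then 1 else 0)) + 1
              else x l - (if l ∈ H then 1 else 0)) :=
            ih (fun l => x l - (if l ∈ H then 1 else 0)) i j hij hlt hr
          have heq : (fun l => (if l = i then x i - 1 else if l = j then x j + 1 else x l)
                - (if l ∈ H then 1 else 0))
              = (fun l => if l = i then (x i - (if i ∈ H then 1 else 0)) - 1
                else if l = j then (x j - (if j ∈ H then 1 else 0)) + 1
                else x l - (if l ∈ H then 1 else 0)) := by
            funext l
            by_cases hli : l = i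
            all_goals by_cases hlj : l = j
            all_goals simp [hli, hlj, hij, hji, hi, hj, Finset.mem_insert, Finset.mem_erase]
            all_goals omega
          show Reach F N (fun l => (if l = i then x i - 1 else if l = j then x j + 1 else x l)
            - (if l ∈ H then 1 else 0))
          rw [heq]; exact key
      · -- i ∈ H, j ∉ H : swap i for j in H
        refine ⟨insert j (H.erase i), hF H hHF _ ?_, ?_, ?_⟩
        · rw [Finset.card_insert_of_notMem (fun h => hj (Finset.mem_of_mem_erase h)),
            Finset.card_erase_of_mem hi]
          have : 1 ≤ H.card := Finset.card_pos.mpr ⟨i, hi⟩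
          omega
        · intro l hl
          show 1 ≤ if l = i then x i - 1 else if l = j then x j + 1 else x l
          rcases Finset.mem_insert.mp hl with h | h
          · rw [h, if_neg hji, if_pos rfl]; omega
          · have hlH := Finset.mem_of_mem_erase h
            have hli := Finset.ne_of_mem_erase h
            by_cases hlj : l = j
            · rw [hlj, if_neg hji, if_pos rfl]; omega
            · rw [if_neg hli, if_neg hlj]; exact hH1 l hlH
        · have heq : (fun l => (if l = i then x i - 1 else if l = j then x j + 1 else x l)
                - (if l ∈ insert j (H.erase i) then 1 else 0))
              = (fun l => x l - (if l ∈ H then 1 else 0)) := by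
            funext l
            by_cases hli : l = i
            all_goals by_cases hlj : l = j
            all_goals simp [hli, hlj, hij, hji, hi, hj, Finset.mem_insert, Finset.mem_erase]
            all_goals omega
          show Reach F N (fun l => (if l = i then x i - 1 else if l = j then x j + 1 else x l)
            - (if l ∈ insert j (H.erase i) then 1 else 0))
          rw [heq]; exact hr
    · by_cases hj : j ∈ H
      · -- j ∈ H, i ∉ H : keep H
        have hxj1 : 1 ≤ x j := hH1 j hj
        refine ⟨H, hHF, ?_, ?_⟩
        · intro l hl
          show 1 ≤ if l = i then x i - 1 else if l = j then x j + 1 else x l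
          by_cases hli : l = i
          · exact absurd (hli ▸ hl) hi
          · by_cases hlj : l = j
            · rw [hlj, if_neg hji, if_pos rfl]; omega
            · rw [if_neg hli, if_neg hlj]; exact hH1 l hl
        · have hlt : (fun l => x l - (if l ∈ H then 1 else 0)) j <
              (fun l => x l - (if l ∈ H then 1 else 0)) i := by
            show x j - (if j ∈ H then 1 else 0) < x i - (if i ∈ H then 1 else 0)
            rw [if_pos hj, if_neg hi]; omega
          have key : Reach F N (fun l => if l = i then (x i - (if i ∈ H then 1 else 0)) - 1
              else if l = j then (x j - (if j ∈ H then 1 else 0)) + 1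
              else x l - (if l ∈ H then 1 else 0)) :=
            ih (fun l => x l - (if l ∈ H then 1 else 0)) i j hij hlt hr
          have heq : (fun l => (if l = i then x i - 1 else if l = j then x j + 1 else x l)
                - (if l ∈ H then 1 else 0))
              = (fun l => if l = i then (x i - (if i ∈ H then 1 else 0)) - 1
                else if l = j then (x j - (if j ∈ H then 1 else 0)) + 1
                else x l - (if l ∈ H then 1 else 0)) := by
            funext l
            by_cases hli : l = i
            all_goals by_cases hlj : l = j
            all_goals simp [hli, hlj, hij, hji, hi, hj, Finset.mem_insert, Finset.mem_erase]
            all_goals omega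
          show Reach F N (fun l => (if l = i then x i - 1 else if l = j then x j + 1 else x l)
            - (if l ∈ H then 1 else 0))
          rw [heq]; exact key
      · -- neither in H : keep H
        refine ⟨H, hHF, ?_, ?_⟩
        · intro l hl
          show 1 ≤ if l = i then x i - 1 else if l = j then x j + 1 else x l
          by_cases hli : l = i
          · exact absurd (hli ▸ hl) hi
          · by_cases hlj : l = j
            · exact absurd (hlj ▸ hl) hj
            · rw [if_neg hli, if_neg hlj]; exact hH1 l hl
        · have hlt : (fun l => x l - (if l ∈ H then 1 else 0)) j <
              (fun l => x l - (if l ∈ H then 1 else 0)) i := by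
            show x j - (if j ∈ H then 1 else 0) < x i - (if i ∈ H then 1 else 0)
            rw [if_neg hj, if_neg hi]; omega
          have key : Reach F N (fun l => if l = i then (x i - (if i ∈ H then 1 else 0)) - 1
              else if l = j then (x j - (if j ∈ H then 1 else 0)) + 1
              else x l - (if l ∈ H then 1 else 0)) :=
            ih (fun l => x l - (if l ∈ H then 1 else 0)) i j hij hlt hr
          have heq : (fun l => (if l = i then x i - 1 else if l = j then x j + 1 else x l)
                - (if l ∈ H then 1 else 0))
              = (fun l => if l = i then (x i - (if i ∈ H then 1 else 0)) - 1
                else if l = j then (x j - (if j ∈ H then 1 else 0)) + 1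
                else x l - (if l ∈ H then 1 else 0)) := by
            funext l
            by_cases hli : l = i
            all_goals by_cases hlj : l = j
            all_goals simp [hli, hlj, hij, hji, hi, hj, Finset.mem_insert, Finset.mem_erase]
            all_goals omega
          show Reach F N (fun l => (if l = i then x i - 1 else if l = j then x j + 1 else x l)
            - (if l ∈ H then 1 else 0))
          rw [heq]; exact key

/-- Every hyperedge of `Hlambda` is nonempty (given positivity/monotonicity). -/
lemma Hlambda_card_pos {n k : ℕ} {gl : ℕ → ℕ} (hpos : 0 < gl 1)
    (hmono : ∀ i, 1 ≤ i → i < k → gl i < gl (i + 1))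
    {H : Finset (Fin n)} (hH : H ∈ Hlambda (n := n) k gl) : 0 < H.card := by
  obtain ⟨j, hj1, hjk, hcard⟩ := hH
  rw [hcard]
  clear hcard
  induction j with
  | zero => omega
  | succ m ihm =>
    rcases Nat.eq_zero_or_pos m with h | h
    · subst h; exact hpos
    · exact lt_trans (ihm h (by omega)) (hmono m h (by omega))

lemma reach_le_sum_s11 {n : ℕ} {F : Set (Finset (Fin n))}
    (hne : ∀ H ∈ F, 0 < H.card) (N : ℕ) :
    ∀ x : Fin n → ℕ, Reach F N x → N ≤ ∑ l, x l := by
  induction N with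
  | zero => intro x _; exact Nat.zero_le _
  | succ N ih =>
    rintro x ⟨H, hHF, hH1, hr⟩
    have hbound := ih _ hr
    have h1 : ∑ l, (if l ∈ H then (1:ℕ) else 0) = H.card := by
      rw [Finset.sum_ite_mem, Finset.univ_inter, Finset.sum_const, smul_eq_mul, mul_one]
    have hsum : ∑ l, (x l - (if l ∈ H then 1 else 0)) + H.card = ∑ l, x l := by
      rw [← h1, ← Finset.sum_add_distrib]
      apply Finset.sum_congr rfl
      intro l _
      by_cases hl : l ∈ H
      · have := hH1 l hl; rw [if_pos hl]; omega
      · rw [if_neg hl]; omega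
    have := hne H hHF
    omega

lemma Hlambda_card_closed {n k : ℕ} (gl : ℕ → ℕ) :
    ∀ H ∈ Hlambda (n := n) k gl, ∀ H' : Finset (Fin n), H'.card = H.card →
      H' ∈ Hlambda (n := n) k gl := by
  rintro H ⟨j, hj1, hjk, hcard⟩ H' hcard'
  exact ⟨j, hj1, hjk, hcard' ▸ hcard⟩

/-- Lemma: moving a stone from a larger pile `i` to a smaller pile `j` does not
decrease the Tetris value of a symmetric hypergraph. -/
theorem tetris_transfer_le
    (n k : ℕ) (gl : ℕ → ℕ) (hk : 1 ≤ k) (hpos : 0 < gl 1)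
    (hmono : ∀ i, 1 ≤ i → i < k → gl i < gl (i + 1)) (hle : gl k ≤ n)
    (x : Fin n → ℕ) (i j : Fin n) (hij : i ≠ j) (hx : x j < x i) :
    tetris (Hlambda (n := n) k gl) x ≤
      tetris (Hlambda (n := n) k gl)
        (fun l => if l = i then x i - 1 else if l = j then x j + 1 else x l) := by
  set F := Hlambda (n := n) k gl with hF
  set x' : Fin n → ℕ := fun l => if l = i then x i - 1 else if l = j then x j + 1 else x l
    with hx'
  unfold tetris
  apply csSup_le_csSup
  · refine ⟨∑ l, x' l, ?_⟩
    intro N hN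
    rw [Set.mem_setOf_eq, tetrisReach_iff_reach] at hN
    exact reach_le_sum_s11 (fun H hH => Hlambda_card_pos hpos hmono hH) N x' hN
  · refine ⟨0, ?_⟩
    rw [Set.mem_setOf_eq, tetrisReach_iff_reach]
    trivial
  · intro N hN
    rw [Set.mem_setOf_eq, tetrisReach_iff_reach] at hN ⊢
    exact reach_transfer F (Hlambda_card_closed gl) N x i j hij hx hN
end

section
/- Let V = {1,…,n}, let λ = (λ_1,…,λ_k) be an integer sequence with 0 < λ_1 < ⋯ < λ_k ≤ n satisfying λ_{i+1} − λ_i ≤ λ_1 for all i = 1,…,k−1 and λ_1 + λ_k = n, and let 𝓗 = 𝓗(λ). Then for every position x ∈ ℤ_{≥0}^V and every integer η with 1 ≤ η < y_𝓗(x), there exists a move x → x' such that m(x') = m(x) and y_𝓗(x') = η. -/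
open Finset

namespace C2Aux
variable {n : ℕ}

def use (s : Multiset (Finset (Fin n))) (i : Fin n) : ℕ :=
  (s.map (fun H => if i ∈ H then 1 else 0)).sum

def MReach (F : Set (Finset (Fin n))) (z : Fin n → ℕ) (N : ℕ) : Prop :=
  ∃ s : Multiset (Finset (Fin n)), Multiset.card s = N ∧ (∀ H ∈ s, H ∈ F) ∧ ∀ i, use s i ≤ z i

lemma use_cons (a : Finset (Fin n)) (s : Multiset (Finset (Fin n))) (i : Fin n) :
    use (a ::ₘ s) i = (if i ∈ a then 1 else 0) + use s i := by
  simp [use]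

lemma use_erase {s : Multiset (Finset (Fin n))} {g : Finset (Fin n)} (hg : g ∈ s) (i : Fin n) :
    use (s.erase g) i = use s i - (if i ∈ g then 1 else 0) := by
  conv_rhs => rw [← Multiset.cons_erase hg, use_cons]
  omega

lemma one_le_use {s : Multiset (Finset (Fin n))} {g : Finset (Fin n)} (hg : g ∈ s)
    {i : Fin n} (hi : i ∈ g) : 1 ≤ use s i := by
  rw [← Multiset.cons_erase hg, use_cons, if_pos hi]
  omega

lemma exists_mem_of_use_pos {s : Multiset (Finset (Fin n))} {i : Fin n}
    (h : 0 < use s i) : ∃ H ∈ s, i ∈ H := by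
  by_contra hc
  push_neg at hc
  have : use s i = 0 := by
    apply Multiset.sum_eq_zero
    intro x hx
    obtain ⟨H, hH, rfl⟩ := Multiset.mem_map.1 hx
    simp [hc H hH]
  omega

lemma list_sum_getD (L : List (Finset (Fin n))) (g : Finset (Fin n) → ℕ) :
    ∑ l ∈ Finset.range L.length, g (L.getD l ∅) = (L.map g).sum := by
  induction L with
  | nil => simp
  | cons a L ih =>
    rw [List.length_cons, Finset.sum_range_succ']
    simp only [List.getD_cons_succ, List.getD_cons_zero, List.map_cons, List.sum_cons]
    rw [ih]; omega

lemma tetrisReach_iff_mreach (F : Set (Finset (Fin n))) (z : Fin n → ℕ) (N : ℕ) :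
    TetrisReach F z N ↔ MReach F z N := by
  constructor
  · rintro ⟨f, hf, hsum⟩
    refine ⟨Multiset.map f (Multiset.range N), by simp, ?_, ?_⟩
    · intro H hH
      obtain ⟨l, hl, rfl⟩ := Multiset.mem_map.1 hH
      exact hf l (Multiset.mem_range.1 hl)
    · intro i
      rcases Nat.eq_zero_or_pos N with h0 | h0
      · subst h0; simp [use]
      · have h := hsum (N - 1) (by omega) i
        rw [Nat.sub_add_cancel h0] at h
        calc use (Multiset.map f (Multiset.range N)) i
            = ∑ l ∈ Finset.range N, (if i ∈ f l then 1 else 0) := by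
              rw [use, Multiset.map_map, Finset.sum]
              rfl
          _ ≤ z i := h
  · rintro ⟨s, hcard, hmem, husage⟩
    refine ⟨fun j => s.toList.getD j ∅, ?_, ?_⟩
    · intro j hj
      apply hmem
      rw [← Multiset.mem_toList]
      show s.toList.getD j ∅ ∈ s.toList
      have hlen : j < s.toList.length := by rw [Multiset.length_toList, hcard]; exact hj
      rw [List.getD_eq_getElem _ _ hlen]
      exact List.getElem_mem hlen
    · intro j hj i
      have hlen : s.toList.length = N := by rw [Multiset.length_toList, hcard]
      have h1 : ∑ l ∈ Finset.range (j + 1), (if i ∈ s.toList.getD l ∅ then 1 else 0) ≤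
          ∑ l ∈ Finset.range N, (if i ∈ s.toList.getD l ∅ then 1 else 0) := by
        apply Finset.sum_le_sum_of_subset
        apply Finset.range_subset_range.2
        omega
      have h2 : ∑ l ∈ Finset.range N, (if i ∈ s.toList.getD l ∅ then 1 else 0) = use s i := by
        rw [← hlen, list_sum_getD s.toList (fun H => if i ∈ H then 1 else 0)]
        rw [use]
        conv_rhs => rw [← Multiset.coe_toList s]
        rw [Multiset.map_coe, Multiset.sum_coe]
      exact le_trans h1 (h2 ▸ husage i)

lemma sum_use (s : Multiset (Finset (Fin n))) :
    ∑ i : Fin n, use s i = (s.map Finset.card).sum := by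
  induction s using Multiset.induction_on with
  | empty => simp [use]
  | cons a s ih =>
    simp only [use_cons, Finset.sum_add_distrib, ih, Multiset.map_cons, Multiset.sum_cons]
    congr 1
    simp [Finset.sum_ite_mem]

lemma card_le_sum_card {s : Multiset (Finset (Fin n))} (h : ∀ H ∈ s, (1:ℕ) ≤ H.card) :
    Multiset.card s ≤ (s.map Finset.card).sum := by
  induction s using Multiset.induction_on with
  | empty => simp
  | cons a s ih =>
    simp only [Multiset.card_cons, Multiset.map_cons, Multiset.sum_cons]
    have h1 := h a (Multiset.mem_cons_self a s)
    have h2 := ih (fun H hH => h H (Multiset.mem_cons_of_mem hH))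
    omega

lemma mreach_le_sum {F : Set (Finset (Fin n))} {z : Fin n → ℕ} {N : ℕ}
    (hF : ∀ H ∈ F, (1:ℕ) ≤ H.card) (h : MReach F z N) : N ≤ ∑ i, z i := by
  obtain ⟨s, hcard, hmem, husage⟩ := h
  calc N = Multiset.card s := hcard.symm
    _ ≤ (s.map Finset.card).sum := card_le_sum_card (fun H hH => hF H (hmem H hH))
    _ = ∑ i : Fin n, use s i := (sum_use s).symm
    _ ≤ ∑ i, z i := Finset.sum_le_sum (fun i _ => husage i)

lemma mreach_zero (F : Set (Finset (Fin n))) (z : Fin n → ℕ) : MReach F z 0 :=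
  ⟨0, by simp, by simp, fun i => by simp [use]⟩

lemma tetris_spec {F : Set (Finset (Fin n))} (hF : ∀ H ∈ F, (1:ℕ) ≤ H.card) (z : Fin n → ℕ) :
    MReach F z (tetris F z) ∧ ∀ N, MReach F z N → N ≤ tetris F z := by
  have hbdd : BddAbove {N | TetrisReach F z N} := by
    refine ⟨∑ i, z i, fun N hN => ?_⟩
    exact mreach_le_sum hF ((tetrisReach_iff_mreach F z N).1 hN)
  have hne : {N | TetrisReach F z N}.Nonempty :=
    ⟨0, (tetrisReach_iff_mreach F z 0).2 (mreach_zero F z)⟩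
  constructor
  · exact (tetrisReach_iff_mreach F z _).1 (Nat.sSup_mem hne hbdd)
  · intro N h
    exact le_csSup hbdd ((tetrisReach_iff_mreach F z N).2 h)

lemma tetris_mono {F : Set (Finset (Fin n))} (hF : ∀ H ∈ F, (1:ℕ) ≤ H.card)
    {z w : Fin n → ℕ} (h : ∀ i, z i ≤ w i) : tetris F z ≤ tetris F w := by
  obtain ⟨s, hcard, hmem, husage⟩ := (tetris_spec hF z).1
  exact (tetris_spec hF w).2 _ ⟨s, hcard, hmem, fun i => le_trans (husage i) (h i)⟩

def GoodMove (F : Set (Finset (Fin n))) (z : Fin n → ℕ) (v : ℕ) : Prop :=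
  ∃ z' H, H ∈ F ∧ (∀ i ∈ H, 0 < z i) ∧ (∀ i ∈ H, z' i < z i) ∧ (∀ i ∉ H, z' i = z i) ∧
    tetris F z' = v

lemma good_base {F : Set (Finset (Fin n))} (hF : ∀ H ∈ F, (1:ℕ) ≤ H.card)
    {z : Fin n → ℕ} (h1 : 1 ≤ tetris F z) :
    GoodMove F z (tetris F z - 1) := by
  obtain ⟨s, hcard, hmem, husage⟩ := (tetris_spec hF z).1
  have hs0 : s ≠ 0 := by
    intro h
    rw [h] at hcard
    simp at hcard
    omega
  obtain ⟨g, hg⟩ := Multiset.exists_mem_of_ne_zero hs0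
  have hgz : ∀ i ∈ g, 0 < z i := fun i hi => lt_of_lt_of_le (one_le_use hg hi) (husage i)
  refine ⟨fun i => z i - (if i ∈ g then 1 else 0), g, hmem g hg, hgz, ?_, ?_, ?_⟩
  · intro i hi
    have := hgz i hi
    simp only [if_pos hi]
    omega
  · intro i hi
    simp [hi]
  · have hup : ∀ N, MReach F (fun i => z i - if i ∈ g then 1 else 0) N → N + 1 ≤ tetris F z := by
      rintro N ⟨s', hcard', hmem', husage'⟩
      apply (tetris_spec hF z).2
      refine ⟨g ::ₘ s', by simp [hcard'], ?_, ?_⟩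
      · intro K hK
        rcases Multiset.mem_cons.1 hK with h | h
        · rw [h]; exact hmem g hg
        · exact hmem' K h
      · intro i
        rw [use_cons]
        have h1 : use s' i ≤ z i - (if i ∈ g then 1 else 0) := husage' i
        have h2 : (if i ∈ g then 1 else 0) ≤ z i := by
          split
          · exact hgz i ‹_›
          · omega
        omega
    have hlow : MReach F (fun i => z i - if i ∈ g then 1 else 0) (tetris F z - 1) := by
      refine ⟨s.erase g, ?_, fun K hK => hmem K (Multiset.mem_of_mem_erase hK), fun i => ?_⟩
      · rw [Multiset.card_erase_of_mem hg, hcard]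
        exact Nat.pred_eq_sub_one
      · show use (s.erase g) i ≤ z i - (if i ∈ g then 1 else 0)
        rw [use_erase hg]
        have := husage i
        omega
    have h2 := (tetris_spec hF _).2 _ hlow
    have h3 := hup _ ((tetris_spec hF _).1)
    omega

lemma glmono {k : ℕ} {gl : ℕ → ℕ} (hmono : ∀ i, 1 ≤ i → i < k → gl i < gl (i + 1)) :
    ∀ a b, 1 ≤ a → a ≤ b → b ≤ k → gl a ≤ gl b := by
  intro a b ha hab
  induction b, hab using Nat.le_induction with
  | base => intro; exact le_refl _
  | succ b hb ih =>
    intro hbk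
    have h1 := ih (by omega)
    have h2 := hmono b (by omega) (by omega)
    omega

lemma good_step {k : ℕ} {gl : ℕ → ℕ} (hpos : 0 < gl 1)
    (hmono : ∀ i, 1 ≤ i → i < k → gl i < gl (i + 1))
    (hgap : ∀ i, 1 ≤ i → i < k → gl (i + 1) - gl i ≤ gl 1)
    (hsum : gl 1 + gl k = n)
    {z : Fin n → ℕ} (hzero : ∃ i0, z i0 = 0) {v : ℕ} (hv1 : 1 ≤ v)
    (hgood : GoodMove (Hlambda (n := n) k gl) z v) :
    GoodMove (Hlambda (n := n) k gl) z (v - 1) := by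
  classical
  set F := Hlambda (n := n) k gl with hFdef
  have hedge : ∀ H ∈ F, gl 1 ≤ H.card := by
    rintro H ⟨j, hj1, hjk, hcard⟩
    rw [hcard]
    exact glmono hmono 1 j le_rfl hj1 hjk
  have hF1 : ∀ H ∈ F, (1:ℕ) ≤ H.card := fun H hH => le_trans hpos (hedge H hH)
  obtain ⟨i0, hi0⟩ := hzero
  have hAne : {t : ℕ | ∃ z' H, H ∈ F ∧ (∀ i ∈ H, 0 < z i) ∧ (∀ i ∈ H, z' i < z i) ∧
      (∀ i ∉ H, z' i = z i) ∧ tetris F z' = v ∧ ∑ i, z' i = t}.Nonempty := by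
    obtain ⟨z', H, h1, h2, h3, h4, h5⟩ := hgood
    exact ⟨∑ i, z' i, z', H, h1, h2, h3, h4, h5, rfl⟩
  have hmem0 : ∃ z' H, H ∈ F ∧ (∀ i ∈ H, 0 < z i) ∧ (∀ i ∈ H, z' i < z i) ∧
      (∀ i ∉ H, z' i = z i) ∧ tetris F z' = v ∧ ∑ i, z' i =
        sInf {t : ℕ | ∃ z' H, H ∈ F ∧ (∀ i ∈ H, 0 < z i) ∧ (∀ i ∈ H, z' i < z i) ∧
          (∀ i ∉ H, z' i = z i) ∧ tetris F z' = v ∧ ∑ i, z' i = t} :=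
    Nat.sInf_mem hAne
  obtain ⟨z', H, hHF, hHP, hlt, heqz, htet, hsA⟩ := hmem0
  have hmin : ∀ (w : Fin n → ℕ) (H' : Finset (Fin n)), H' ∈ F → (∀ i ∈ H', 0 < z i) →
      (∀ i ∈ H', w i < z i) → (∀ i ∉ H', w i = z i) → tetris F w = v →
      ∑ i, z' i ≤ ∑ i, w i := by
    intro w H' a b c d e
    have h0 : sInf {t : ℕ | ∃ z' H, H ∈ F ∧ (∀ i ∈ H, 0 < z i) ∧ (∀ i ∈ H, z' i < z i) ∧
        (∀ i ∉ H, z' i = z i) ∧ tetris F z' = v ∧ ∑ i, z' i = t} ≤ ∑ i, w i :=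
      Nat.sInf_le ⟨w, H', a, b, c, d, e, rfl⟩
    exact le_trans (le_of_eq hsA) h0
  clear hsA hAne
  by_cases hc : ∃ i ∈ H, 1 ≤ z' i
  · obtain ⟨i1, hi1H, hi1⟩ := hc
    set w := Function.update z' i1 (z' i1 - 1) with hw
    have hwi1 : w i1 = z' i1 - 1 := Function.update_self _ _ _
    have hwne : ∀ j, j ≠ i1 → w j = z' j := fun j hj => Function.update_of_ne hj _ _
    have hwle : ∀ j, w j ≤ z' j := by
      intro j
      rcases eq_or_ne j i1 with rfl | h
      · rw [hwi1]; omega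
      · rw [hwne j h]
    have hwlt : ∑ i, w i < ∑ i, z' i := by
      apply Finset.sum_lt_sum (fun j _ => hwle j)
      exact ⟨i1, Finset.mem_univ i1, by rw [hwi1]; omega⟩
    have hml : ∀ i ∈ H, w i < z i := by
      intro i hi
      rcases eq_or_ne i i1 with rfl | h
      · rw [hwi1]; have := hlt i hi; omega
      · rw [hwne i h]; exact hlt i hi
    have hmr : ∀ i ∉ H, w i = z i := by
      intro i hi
      have hne : i ≠ i1 := fun h => hi (h ▸ hi1H)
      rw [hwne i hne]; exact heqz i hi
    have hup : tetris F w ≤ v := htet ▸ tetris_mono hF1 hwle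
    have hnev : tetris F w ≠ v := by
      intro h
      have := hmin w H hHF hHP hml hmr h
      omega
    obtain ⟨s, hcard, hmem, husage⟩ := (tetris_spec hF1 z').1
    rw [htet] at hcard
    have hlow : v - 1 ≤ tetris F w := by
      by_cases hu : use s i1 ≤ z' i1 - 1
      · have hr : MReach F w v := ⟨s, hcard, hmem, fun i => by
          rcases eq_or_ne i i1 with rfl | h
          · rw [hwi1]; exact hu
          · rw [hwne i h]; exact husage i⟩
        have := (tetris_spec hF1 w).2 _ hr
        omega
      · have hui : use s i1 = z' i1 := by have := husage i1; omega
        have hpos' : 0 < use s i1 := by omega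
        obtain ⟨g, hgs, hig⟩ := exists_mem_of_use_pos hpos'
        have hr : MReach F w (v - 1) := by
          refine ⟨s.erase g, ?_, fun K hK => hmem K (Multiset.mem_of_mem_erase hK), fun i => ?_⟩
          · rw [Multiset.card_erase_of_mem hgs, hcard]
            exact Nat.pred_eq_sub_one
          · rw [use_erase hgs]
            rcases eq_or_ne i i1 with rfl | h
            · rw [hwi1, if_pos hig]; omega
            · rw [hwne i h]; have := husage i; omega
        exact (tetris_spec hF1 w).2 _ hr
    exact ⟨w, H, hHF, hHP, hml, hmr, by omega⟩
  · push_neg at hc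
    have hz'0 : ∀ i ∈ H, z' i = 0 := fun i hi => by have := hc i hi; omega
    obtain ⟨s, hcard, hmem, husage⟩ := (tetris_spec hF1 z').1
    rw [htet] at hcard
    have hs0 : s ≠ 0 := by
      intro h; rw [h] at hcard; simp at hcard; omega
    obtain ⟨g, hgs⟩ := Multiset.exists_mem_of_ne_zero hs0
    have hgF : g ∈ F := hmem g hgs
    have hgz' : ∀ i ∈ g, 1 ≤ z' i := fun i hi => le_trans (one_le_use hgs hi) (husage i)
    have hgH : ∀ i ∈ g, i ∉ H := by
      intro i hi hiH
      have := hz'0 i hiH; have := hgz' i hi; omega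
    have hz'le : ∀ i, z' i ≤ z i := by
      intro i
      by_cases h : i ∈ H
      · exact le_of_lt (hlt i h)
      · exact le_of_eq (heqz i h)
    have hgz : ∀ i ∈ g, 0 < z i := fun i hi => lt_of_lt_of_le (hgz' i hi) (hz'le i)
    obtain ⟨j, hj1, hjk, hHcard⟩ := hHF
    have hi0H : i0 ∉ H := fun h => by have := hHP i0 h; omega
    have hi0g : i0 ∉ g := fun h => by have := hgz i0 h; omega
    have hdisj : Disjoint H g := Finset.disjoint_right.2 hgH
    have hcub : H.card + g.card ≤ n - 1 := by
      have h1 : H ∪ g ⊆ Finset.univ.erase i0 := by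
        intro i hi
        rw [Finset.mem_erase]
        refine ⟨?_, Finset.mem_univ i⟩
        rintro rfl
        rcases Finset.mem_union.1 hi with h | h
        · exact hi0H h
        · exact hi0g h
      have h2 := Finset.card_le_card h1
      rw [Finset.card_union_of_disjoint hdisj] at h2
      have h3 : (Finset.univ.erase i0).card = n - 1 := by
        rw [Finset.card_erase_of_mem (Finset.mem_univ i0), Finset.card_univ, Fintype.card_fin]
      omega
    have hn1 : 1 ≤ n := by
      have := hedge g hgF
      have := Finset.card_le_card (Finset.subset_univ g)
      rw [Finset.card_univ, Fintype.card_fin] at this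
      omega
    have hjk' : j < k := by
      rcases Nat.lt_or_ge j k with h | h
      · exact h
      · exfalso
        have hjeq : j = k := by omega
        have hge := hedge g hgF
        rw [hHcard, hjeq] at hcub
        omega
    have hd1 : 1 ≤ gl (j + 1) - gl j := by have := hmono j hj1 hjk'; omega
    have hdg : gl (j + 1) - gl j ≤ g.card := le_trans (hgap j hj1 hjk') (hedge g hgF)
    obtain ⟨D, hDg, hDcard⟩ := Finset.exists_subset_card_eq hdg
    have hDz : ∀ i ∈ D, 0 < z i := fun i hi => hgz i (hDg hi)
    have hDz' : ∀ i ∈ D, z' i = z i := fun i hi => heqz i (hgH i (hDg hi))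
    have hDz'1 : ∀ i ∈ D, 1 ≤ z' i := fun i hi => hgz' i (hDg hi)
    have hdisj2 : Disjoint H D := hdisj.mono_right hDg
    have hH2card : (H ∪ D).card = gl (j + 1) := by
      rw [Finset.card_union_of_disjoint hdisj2, hHcard, hDcard]
      have := hmono j hj1 hjk'
      omega
    have hH2F : H ∪ D ∈ F := ⟨j + 1, by omega, by omega, hH2card⟩
    have hH2P : ∀ i ∈ H ∪ D, 0 < z i := by
      intro i hi
      rcases Finset.mem_union.1 hi with h | h
      · exact hHP i h
      · exact hDz i h
    set w : Fin n → ℕ := fun i => if i ∈ D then z i - 1 else z' i with hwdef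
    have hwD : ∀ i ∈ D, w i = z i - 1 := fun i hi => by simp [hwdef, hi]
    have hwnD : ∀ i, i ∉ D → w i = z' i := fun i hi => by simp [hwdef, hi]
    have hml : ∀ i ∈ H ∪ D, w i < z i := by
      intro i hi
      by_cases h : i ∈ D
      · rw [hwD i h]; have := hDz i h; omega
      · rw [hwnD i h]
        rcases Finset.mem_union.1 hi with h' | h'
        · exact hlt i h'
        · exact absurd h' h
    have hmr : ∀ i ∉ H ∪ D, w i = z i := by
      intro i hi
      have hiD : i ∉ D := fun h => hi (Finset.mem_union_right _ h)
      have hiH : i ∉ H := fun h => hi (Finset.mem_union_left _ h)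
      rw [hwnD i hiD]; exact heqz i hiH
    have hwle : ∀ i, w i ≤ z' i := by
      intro i
      by_cases h : i ∈ D
      · rw [hwD i h, ← hDz' i h]; omega
      · rw [hwnD i h]
    have hup : tetris F w ≤ v := htet ▸ tetris_mono hF1 hwle
    have hlow : v - 1 ≤ tetris F w := by
      refine (tetris_spec hF1 w).2 _
        ⟨s.erase g, ?_, fun K hK => hmem K (Multiset.mem_of_mem_erase hK), fun i => ?_⟩
      · rw [Multiset.card_erase_of_mem hgs, hcard]
        exact Nat.pred_eq_sub_one
      · rw [use_erase hgs]
        by_cases h : i ∈ D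
        · rw [hwD i h, if_pos (hDg h)]
          have h1 := husage i
          have h2 := hDz' i h
          omega
        · rw [hwnD i h]
          have := husage i
          omega
    have hnev : tetris F w ≠ v := by
      intro h
      have hless : ∑ i, w i < ∑ i, z' i := by
        apply Finset.sum_lt_sum (fun i _ => hwle i)
        have hDne : D.Nonempty := Finset.card_pos.1 (by rw [hDcard]; omega)
        obtain ⟨i1, hi1⟩ := hDne
        refine ⟨i1, Finset.mem_univ i1, ?_⟩
        have h1 := hwD i1 hi1
        have h2 := hDz' i1 hi1
        have h3 := hDz'1 i1 hi1
        omega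
      have := hmin w (H ∪ D) hH2F hH2P hml hmr h
      omega
    exact ⟨w, H ∪ D, hH2F, hH2P, hml, hmr, by omega⟩

end C2Aux

/-- Lemma (C2 for minimal transversal-free symmetric hypergraphs). -/
theorem Hlambda_condition_C2
    (n k : ℕ) (gl : ℕ → ℕ) (hk : 1 ≤ k) (hpos : 0 < gl 1)
    (hmono : ∀ i, 1 ≤ i → i < k → gl i < gl (i + 1)) (hle : gl k ≤ n)
    (hgap : ∀ i, 1 ≤ i → i < k → gl (i + 1) - gl i ≤ gl 1)
    (hsum : gl 1 + gl k = n)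
    (x : Fin n → ℕ) (η : ℕ) (hη1 : 1 ≤ η) (hη2 : η < yval (Hlambda (n := n) k gl) x) :
    ∃ x', Move (Hlambda (n := n) k gl) x x' ∧ mval x' = mval x ∧
      yval (Hlambda (n := n) k gl) x' = η := by
  classical
  set F := Hlambda (n := n) k gl with hFdef
  have hedge : ∀ H ∈ F, gl 1 ≤ H.card := by
    rintro H ⟨j, hj1, hjk, hcard⟩
    rw [hcard]
    exact C2Aux.glmono hmono 1 j le_rfl hj1 hjk
  have hF1 : ∀ H ∈ F, (1:ℕ) ≤ H.card := fun H hH => le_trans hpos (hedge H hH)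
  have hn : 0 < n := by omega
  set m := mval x with hm
  set z : Fin n → ℕ := fun i => x i - m with hzdef
  have hmle : ∀ i, m ≤ x i := fun i => Nat.sInf_le ⟨i, rfl⟩
  have hrange : (Set.range x).Nonempty := ⟨x ⟨0, hn⟩, ⟨0, hn⟩, rfl⟩
  obtain ⟨i0, hxi0⟩ := Nat.sInf_mem hrange
  have hxi0' : x i0 = m := hxi0
  have hzi0 : z i0 = 0 := by
    show x i0 - m = 0
    omega
  have hyx : yval F x = tetris F z + 1 := rfl
  have hηT : η ≤ tetris F z := by omega
  have hzero : ∃ j, z j = 0 := ⟨i0, hzi0⟩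
  have hstep : ∀ d, C2Aux.GoodMove F z (η - 1 + d) → C2Aux.GoodMove F z (η - 1) := by
    intro d
    induction d with
    | zero => intro h; simpa using h
    | succ d ih =>
      intro h
      apply ih
      have h2 := C2Aux.good_step hpos hmono hgap hsum hzero
        (show 1 ≤ η - 1 + (d + 1) by omega) h
      have he : η - 1 + (d + 1) - 1 = η - 1 + d := by omega
      rwa [he] at h2
  have hT1 : 1 ≤ tetris F z := by omega
  have hbase : C2Aux.GoodMove F z (tetris F z - 1) := C2Aux.good_base hF1 hT1
  have hgoal : C2Aux.GoodMove F z (η - 1) := by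
    apply hstep (tetris F z - η)
    have heq : tetris F z - 1 = η - 1 + (tetris F z - η) := by omega
    rwa [heq] at hbase
  obtain ⟨z', H, hHF, hHP, hlt, heqz, htet⟩ := hgoal
  have hzx : ∀ i, z i = x i - m := fun i => rfl
  have hx'lt : ∀ i ∈ H, z' i + m < x i := by
    intro i hi
    have h1 := hlt i hi
    have h2 := hmle i
    have h3 := hzx i
    omega
  have hx'eq : ∀ i ∉ H, z' i + m = x i := by
    intro i hi
    have h1 := heqz i hi
    have h2 := hmle i
    have h3 := hzx i
    omega
  have hi0H : i0 ∉ H := by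
    intro h
    have := hHP i0 h
    omega
  have hx'i0 : z' i0 + m = m := by
    have h1 := heqz i0 hi0H
    omega
  have hmv : mval (fun i => z' i + m) = m := by
    have hmem : m ∈ Set.range (fun i => z' i + m) := ⟨i0, hx'i0⟩
    apply le_antisymm
    · show sInf (Set.range (fun i => z' i + m)) ≤ m
      exact Nat.sInf_le hmem
    · show m ≤ sInf (Set.range (fun i => z' i + m))
      apply le_csInf ⟨m, hmem⟩
      rintro y ⟨i, rfl⟩
      exact Nat.le_add_left m (z' i)
  have hy : yval F (fun i => z' i + m) = η := by
    have h1 : (fun i => (z' i + m) - mval (fun j => z' j + m)) = z' := by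
      funext i
      rw [hmv]
      omega
    show tetris F (fun i => (z' i + m) - mval (fun j => z' j + m)) + 1 = η
    rw [h1, htet]
    omega
  exact ⟨fun i => z' i + m, ⟨H, hHF, hx'lt, hx'eq⟩, hmv, hy⟩
end

section
/- Let V = {1,…,n}, let λ = (λ_1,…,λ_k) be an integer sequence with 1 < λ_1 < ⋯ < λ_k ≤ n satisfying λ_{i+1} − λ_i ≤ λ_1 for all i = 1,…,k−1 and λ_1 + λ_k = n, and let 𝓗 = 𝓗(λ). Then for every long position x ∈ ℤ_{≥0}^V and every integer z with m(x) ≤ z < 𝒯_𝓗(x), there exists a move x → x' such that x' is long and 𝒯_𝓗(x') = z. -/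
/-!
Because every `λ₁`-set is an edge and no edge is smaller, `𝒯(x) ≥ N` exactly when
`λ₁ N ≤ ∑ᵢ min(xᵢ, N)`: a greedy schedule of `λ₁`-sets attains the counting bound. Hence taking
one unit from one pile lowers `𝒯` by at most one, and on a box of positions `𝒯` takes every value
between its values at the two extreme corners. For a well-chosen edge `H`, every position between
`x` with the piles of `H` emptied and `x - χ(H)` (`H.piecewise 0 x` and `H.piecewise (x - 1) x`)
is an `H`-move, with `𝒯 ≤ z` at the bottom corner and `𝒯 ≥ z` at the top; the gaps `λᵢ₊₁ - λᵢ ≤ λ₁` and `λ_k = n - λ₁` supply an edge size in every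
window `[t, t + λ₁)` with `t ≤ n - λ₁`, which is what the choice of `H` needs. The box is cut so
that on the part searched either some pile stays `0`, or only the minimal pile has been lowered,
below its old value; then `m` does not grow and `x - m e` does not shrink, so the position stays
long.
-/

open Finset

section General

variable {n : ℕ} {F : Set (Finset (Fin n))} {a : ℕ}

structure MinCardSaturated (F : Set (Finset (Fin n))) (a : ℕ) : Prop where
  pos : 0 < a
  le_card : ∀ H ∈ F, a ≤ H.card
  mem_of_card : ∀ H : Finset (Fin n), H.card = a → H ∈ F

def CompleteLayersDense (F : Set (Finset (Fin n))) (a : ℕ) : Prop :=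
  ∀ t, 1 ≤ t → t + a ≤ n → ∃ s, t ≤ s ∧ s < t + a ∧ ∀ H : Finset (Fin n), H.card = s → H ∈ F

theorem tetrisReach_iff {y : Fin n → ℕ} {N : ℕ} :
    TetrisReach F y N ↔ ∃ f : ℕ → Finset (Fin n), (∀ j < N, f j ∈ F) ∧
      ∀ i, (∑ l ∈ range N, if i ∈ f l then 1 else 0) ≤ y i := by
  refine ⟨fun ⟨f, hf, hy⟩ => ⟨f, hf, fun i => ?_⟩, fun ⟨f, hf, hy⟩ => ⟨f, hf, fun j hj i => ?_⟩⟩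
  · rcases N with _ | N
    · simp
    · exact hy N N.lt_succ_self i
  · exact (sum_le_sum_of_subset (range_subset_range.2 hj)).trans (hy i)

theorem TetrisReach.mul_le_sum_min (hF : ∀ H ∈ F, a ≤ H.card) {y : Fin n → ℕ} {N : ℕ}
    (h : TetrisReach F y N) : a * N ≤ ∑ i, min (y i) N := by
  obtain ⟨f, hf, hy⟩ := tetrisReach_iff.1 h
  calc a * N = ∑ _l ∈ range N, a := by simp [mul_comm]
    _ ≤ ∑ l ∈ range N, (f l).card := sum_le_sum fun l hl => hF _ (hf l (mem_range.1 hl))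
    _ = ∑ i, ∑ l ∈ range N, if i ∈ f l then 1 else 0 := by
      rw [sum_comm]
      simp
    _ ≤ ∑ i, min (y i) N := sum_le_sum fun i _ => le_min (hy i) <| by
      simpa [sum_boole] using card_filter_le (range N) (i ∈ f ·)

theorem TetrisReach.cons {M : Finset (Fin n)} (hM : M ∈ F) {y : Fin n → ℕ}
    (hy : ∀ i ∈ M, 1 ≤ y i) {N : ℕ} (h : TetrisReach F (M.piecewise (y - 1) y) N) :
    TetrisReach F y (N + 1) := by
  obtain ⟨f, hf, hle⟩ := tetrisReach_iff.1 h
  refine tetrisReach_iff.2 ⟨fun l => if l = 0 then M else f (l - 1), fun j hj => ?_, fun i => ?_⟩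
  · rcases j with _ | j
    · simpa
    · simpa using hf j (by omega)
  · have h1 := hle i
    have h2 := hy i
    rw [sum_range_succ']
    by_cases hi : i ∈ M <;> simp [hi] at h1 h2 ⊢ <;> omega

theorem card_mul_le_sum_min {ι : Type*} [Fintype ι] {y : ι → ℕ} {N : ℕ} {K : Finset ι}
    (hK : ∀ i ∈ K, N ≤ y i) : K.card * N ≤ ∑ i, min (y i) N :=
  calc K.card * N = ∑ i ∈ K, min (y i) N := by
        rw [sum_congr rfl fun i hi => min_eq_right (hK i hi)]; simp
    _ ≤ ∑ i, min (y i) N := sum_le_sum_of_subset (subset_univ K)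

theorem sum_min_piecewise_add_card {M : Finset (Fin n)} {y : Fin n → ℕ}
    (hM : ∀ i ∈ M, 1 ≤ y i) (N : ℕ) :
    ∑ i, min (M.piecewise (y - 1) y i) N + (M ∪ univ.filter (N < y ·)).card =
      ∑ i, min (y i) (N + 1) := by
  rw [show (M ∪ univ.filter (N < y ·)).card = ∑ i, if i ∈ M ∪ univ.filter (N < y ·) then 1 else 0
    by rw [sum_boole, Nat.cast_id, filter_mem_eq_inter, univ_inter], ← sum_add_distrib]
  refine sum_congr rfl fun i _ => ?_
  by_cases hi : i ∈ M
  · have := hM i hi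
    simp [hi]
    omega
  · by_cases hN : N < y i <;> simp [hi, hN] <;> omega

theorem card_union_add_mul_le {M : Finset (Fin n)} {y : Fin n → ℕ} (hM : ∀ i ∈ M, 1 ≤ y i)
    {N : ℕ} (h : a * (N + 1) ≤ ∑ i, min (y i) (N + 1))
    (hMG : (M ∪ univ.filter (N < y ·)).card ≤ a ∨ a ≤ (univ.filter (N < y ·)).card) :
    (M ∪ univ.filter (N < y ·)).card + a * N ≤ ∑ i, min (y i) (N + 1) := by
  have := sum_min_piecewise_add_card hM N
  have : (univ.filter (N < y ·)).card * N ≤ ∑ i, min (M.piecewise (y - 1) y i) N :=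
    card_mul_le_sum_min fun i hi => by
      have := (mem_filter.1 hi).2
      by_cases hiM : i ∈ M <;> simp [hiM] <;> omega
  rcases hMG with hMG | hMG <;> nlinarith

theorem exists_subsuperset_card_eq_union_le {α : Type*} [DecidableEq α] {Q G P : Finset α}
    (hQG : Q ⊆ G) (hGP : G ⊆ P) {s : ℕ} (hQs : Q.card ≤ s) (hsP : s ≤ P.card) :
    ∃ H, Q ⊆ H ∧ H ⊆ P ∧ H.card = s ∧ (H ∪ G).card ≤ max s G.card := by
  rcases le_total s G.card with hs | hs
  · obtain ⟨H, hQH, hHG, rfl⟩ := exists_subsuperset_card_eq hQG hQs hs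
    exact ⟨H, hQH, hHG.trans hGP, rfl, by rw [union_eq_right.2 hHG]; exact le_max_right _ _⟩
  · obtain ⟨H, hGH, hHP, rfl⟩ := exists_subsuperset_card_eq hGP hs hsP
    exact ⟨H, hQG.trans hGH, hHP, rfl, by rw [union_eq_left.2 hGH]; exact le_max_left _ _⟩

theorem sum_compl_lt_of_lt_add_card {ι : Type*} [Fintype ι] [DecidableEq ι] {x : ι → ℕ}
    {H : Finset ι} (hx : ∀ i ∈ H, 1 ≤ x i) {c N : ℕ}
    (h : ∑ i, min (x i) (N + 1) < c + H.card) : ∑ i ∈ Hᶜ, min (x i) (N + 1) < c := by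
  have := sum_add_sum_compl H fun i => min (x i) (N + 1)
  have : H.card ≤ ∑ i ∈ H, min (x i) (N + 1) := by
    simpa using card_nsmul_le_sum H _ 1 fun i hi => le_min (hx i hi) (by omega)
  omega

theorem sum_compl_lt_of_card_sdiff_lt {ι : Type*} [Fintype ι] [DecidableEq ι] {x : ι → ℕ}
    {H P : Finset ι} (hHP : H ⊆ P) {N : ℕ} (hcard : (P \ H).card < a)
    (hPc : ∑ i ∈ Pᶜ, min (x i) (N + 1) ≤ N) : ∑ i ∈ Hᶜ, min (x i) (N + 1) < a * (N + 1) := by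
  have := sum_add_sum_compl H fun i => min (x i) (N + 1)
  have := sum_add_sum_compl P fun i => min (x i) (N + 1)
  have := sum_sdiff hHP (f := fun i => min (x i) (N + 1))
  have : ∑ i ∈ P \ H, min (x i) (N + 1) ≤ (P \ H).card * (N + 1) := by
    simpa using sum_le_card_nsmul (P \ H) _ _ fun i _ => min_le_right (x i) (N + 1)
  nlinarith

theorem exists_between_eq_of_drop_le_one {ι : Type*} [Fintype ι] [DecidableEq ι] (f : (ι → ℕ) → ℕ)
    (hf : ∀ y i, f y ≤ f (Function.update y i (y i - 1)) + 1) {lo hi : ι → ℕ} (hle : lo ≤ hi)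
    {z : ℕ} (hlo : f lo ≤ z) (hhi : z ≤ f hi) : ∃ y, lo ≤ y ∧ y ≤ hi ∧ f y = z := by
  induction hs : ∑ i, hi i using Nat.strong_induction_on generalizing hi with
  | _ s ih =>
    rcases hhi.eq_or_lt with h | h
    · exact ⟨hi, hle, le_rfl, h.symm⟩
    obtain ⟨i, hlt⟩ : ∃ i, lo i < hi i := by
      by_contra! h'
      rw [le_antisymm h' hle] at h
      omega
    have hstep := hf hi i
    set hi' := Function.update hi i (hi i - 1)
    have hle' : hi' ≤ hi := update_le_self_iff.2 (Nat.sub_le _ _)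
    obtain ⟨y, h1, h2, h3⟩ := ih (∑ j, hi' j)
      (hs ▸ sum_lt_sum (fun j _ => hle' j) ⟨i, mem_univ _, by simp [hi']; omega⟩)
      (fun j => by
        rcases eq_or_ne j i with rfl | hj
        · simp [hi']; omega
        · simpa [hi', hj] using hle j)
      (by omega) rfl
    exact ⟨y, h1, h2.trans hle', h3⟩

namespace MinCardSaturated

theorem tetrisReach_of_mul_le_sum_min (hF : MinCardSaturated F a) :
    ∀ {N : ℕ} {y : Fin n → ℕ}, a * N ≤ ∑ i, min (y i) N → TetrisReach F y N
  | 0, _, _ => ⟨fun _ => ∅, by simp, by simp⟩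
  | N + 1, y, h => by
    have hP : a ≤ (univ.filter (0 < y ·)).card := by
      have : ∑ i, min (y i) (N + 1) ≤ (univ.filter (0 < y ·)).card * (N + 1) :=
        calc ∑ i, min (y i) (N + 1) = ∑ i ∈ univ.filter (0 < y ·), min (y i) (N + 1) :=
              (sum_filter_of_ne fun _ _ h => by omega).symm
          _ ≤ _ := by simpa using sum_le_card_nsmul _ _ _ fun i _ => min_le_right (y i) (N + 1)
      exact Nat.le_of_mul_le_mul_right (h.trans this) N.succ_pos
    obtain ⟨M, -, hMP, hMa, hMG⟩ := exists_subsuperset_card_eq_union_le (empty_subset _)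
      (fun i hi => by simp at hi ⊢; omega : univ.filter (N < y ·) ⊆ univ.filter (0 < y ·))
      (by simp) hP
    have hM : ∀ i ∈ M, 1 ≤ y i := fun i hi => (mem_filter.1 (hMP hi)).2
    refine TetrisReach.cons (hF.mem_of_card M hMa) hM (hF.tetrisReach_of_mul_le_sum_min ?_)
    have := card_union_add_mul_le hM h (by omega)
    have := sum_min_piecewise_add_card hM N
    omega

theorem le_sum_of_tetrisReach (hF : MinCardSaturated F a) {y : Fin n → ℕ} {N : ℕ}
    (h : TetrisReach F y N) : N ≤ ∑ i, y i :=
  calc N ≤ a * N := Nat.le_mul_of_pos_left N hF.pos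
    _ ≤ ∑ i, min (y i) N := h.mul_le_sum_min hF.le_card
    _ ≤ ∑ i, y i := sum_le_sum fun _ _ => min_le_left _ _

theorem le_tetris_iff (hF : MinCardSaturated F a) {y : Fin n → ℕ} {N : ℕ} :
    N ≤ tetris F y ↔ a * N ≤ ∑ i, min (y i) N := by
  have hbdd : BddAbove {N | TetrisReach F y N} := ⟨_, fun _ => hF.le_sum_of_tetrisReach⟩
  refine ⟨fun hN => ?_, fun h => le_csSup hbdd (hF.tetrisReach_of_mul_le_sum_min h)⟩
  obtain ⟨f, hf, hy⟩ : TetrisReach F y (tetris F y) :=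
    Nat.sSup_mem ⟨0, hF.tetrisReach_of_mul_le_sum_min (by simp)⟩ hbdd
  exact TetrisReach.mul_le_sum_min hF.le_card
    ⟨f, fun j hj => hf j (by omega), fun j hj => hy j (by omega)⟩

theorem tetris_mono (hF : MinCardSaturated F a) {x y : Fin n → ℕ} (h : x ≤ y) :
    tetris F x ≤ tetris F y :=
  hF.le_tetris_iff.2 <| (hF.le_tetris_iff.1 le_rfl).trans <|
    sum_le_sum fun i _ => min_le_min_right _ (h i)

theorem tetris_le_tetris_update (hF : MinCardSaturated F a) (y : Fin n → ℕ) (i : Fin n) :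
    tetris F y ≤ tetris F (Function.update y i (y i - 1)) + 1 := by
  rcases Nat.eq_zero_or_pos (y i) with h0 | hpos
  · rw [h0, zero_tsub, ← h0, Function.update_eq_self]
    omega
  rcases hT : tetris F y with _ | N
  · exact Nat.zero_le _
  have hM : ∀ j ∈ ({i} : Finset (Fin n)), 1 ≤ y j := fun j hj => mem_singleton.1 hj ▸ hpos
  have h1 := card_union_add_mul_le hM (hF.le_tetris_iff.1 hT.ge)
    (by have := card_union_le {i} (univ.filter (N < y ·)); rw [card_singleton] at this; omega)
  have h2 := sum_min_piecewise_add_card hM N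
  rw [piecewise_singleton, Pi.sub_apply, Pi.one_apply] at h2
  exact Nat.succ_le_succ (hF.le_tetris_iff.2 (by omega))

theorem le_tetris_piecewise_sub_one (hF : MinCardSaturated F a) {H : Finset (Fin n)}
    {x : Fin n → ℕ} (hx : ∀ i ∈ H, 1 ≤ x i) {z : ℕ}
    (h : (H ∪ univ.filter (z < x ·)).card + a * z ≤ ∑ i, min (x i) (z + 1)) :
    z ≤ tetris F (H.piecewise (x - 1) x) :=
  hF.le_tetris_iff.2 (by have := sum_min_piecewise_add_card hx z; omega)

theorem tetris_piecewise_zero_le (hF : MinCardSaturated F a) {H : Finset (Fin n)}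
    {x : Fin n → ℕ} {z : ℕ} (h : ∑ i ∈ Hᶜ, min (x i) (z + 1) < a * (z + 1)) :
    tetris F (H.piecewise 0 x) ≤ z := by
  by_contra! hz
  have hS : a * (z + 1) ≤ ∑ i, min (H.piecewise 0 x i) (z + 1) := hF.le_tetris_iff.1 hz
  rw [← sum_add_sum_compl H, sum_eq_zero fun i hi => by simp [hi],
    sum_congr rfl fun i hi => (by simp [mem_compl.1 hi] :
      min (H.piecewise 0 x i) (z + 1) = min (x i) (z + 1))] at hS
  omega

end MinCardSaturated

theorem mval_le (x : Fin n → ℕ) (i : Fin n) : mval x ≤ x i := Nat.sInf_le ⟨i, rfl⟩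

theorem mval_eq_of_forall_le {x : Fin n → ℕ} {i₀ : Fin n} (h : ∀ i, x i₀ ≤ x i) :
    mval x = x i₀ :=
  le_antisymm (mval_le x i₀) (le_csInf ⟨_, i₀, rfl⟩ (by rintro _ ⟨i, rfl⟩; exact h i))

theorem isLong_of_eq_zero {y : Fin n → ℕ} {i : Fin n} (h : y i = 0) : IsLong F y := by
  have := mval_le y i
  unfold IsLong
  omega

theorem IsLong.of_drop_min (hF : MinCardSaturated F a) {x y : Fin n → ℕ} (hx : IsLong F x)
    {i₀ : Fin n} (hmin : ∀ i, x i₀ ≤ x i) (h₀ : y i₀ < x i₀) (hy : ∀ i ≠ i₀, x i - 1 ≤ y i) :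
    IsLong F y := by
  have hymin : ∀ i, y i₀ ≤ y i := fun i => by
    rcases eq_or_ne i i₀ with rfl | hi
    · rfl
    · have := hy i hi; have := hmin i; omega
  unfold IsLong yval at *
  rw [mval_eq_of_forall_le hmin] at hx
  rw [mval_eq_of_forall_le hymin]
  have : tetris F (fun i => x i - x i₀) ≤ tetris F (fun i => y i - y i₀) :=
    hF.tetris_mono fun i => by
      rcases eq_or_ne i i₀ with rfl | hi
      · simp
      · have := hy i hi; have := hmin i; simp only; omega
  calc y i₀ ≤ x i₀ := h₀.le
    _ ≤ _ := hx
    _ ≤ _ := Nat.choose_le_choose 2 (by omega)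

theorem move_of_le_of_le {H : Finset (Fin n)} (hH : H ∈ F) {x y : Fin n → ℕ}
    (hx : ∀ i ∈ H, 1 ≤ x i) (hlo : H.piecewise 0 x ≤ y) (hhi : y ≤ H.piecewise (x - 1) x) :
    Move F x y := by
  refine ⟨H, hH, fun i hi => ?_, fun i hi => ?_⟩
  · have := hhi i
    have := hx i hi
    simp only [hi, piecewise_eq_of_mem, Pi.sub_apply, Pi.one_apply] at *
    omega
  · exact le_antisymm (by simpa [hi] using hhi i) (by simpa [hi] using hlo i)

theorem piecewise_zero_le_update {H : Finset (Fin n)} {x : Fin n → ℕ} {j : Fin n}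
    (hj : j ∈ H ∨ x j = 0) : H.piecewise 0 x ≤ Function.update (H.piecewise (x - 1) x) j 0 :=
  fun i => by
    rcases eq_or_ne i j with rfl | hij
    · rcases hj with hj | hj
      · simp [hj]
      · by_cases hi : i ∈ H <;> simp [hi, hj]
    · by_cases hi : i ∈ H <;> simp [hi, hij]

namespace MinCardSaturated

theorem exists_move_of_box (hF : MinCardSaturated F a) {H : Finset (Fin n)} (hH : H ∈ F)
    {x : Fin n → ℕ} (hx : ∀ i ∈ H, 1 ≤ x i) {lo hi : Fin n → ℕ} (hlo : H.piecewise 0 x ≤ lo)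
    (hlohi : lo ≤ hi) (hhi : hi ≤ H.piecewise (x - 1) x) {z : ℕ} (hTlo : tetris F lo ≤ z)
    (hThi : z ≤ tetris F hi) (hlong : ∀ y, lo ≤ y → y ≤ hi → IsLong F y) :
    ∃ x', Move F x x' ∧ IsLong F x' ∧ tetris F x' = z := by
  obtain ⟨y, hly, hyh, hy⟩ :=
    exists_between_eq_of_drop_le_one (tetris F) hF.tetris_le_tetris_update hlohi hTlo hThi
  exact ⟨y, move_of_le_of_le hH hx (hlo.trans hly) (hyh.trans hhi), hlong y hly hyh, hy⟩

theorem exists_move_of_zero (hF : MinCardSaturated F a) {H : Finset (Fin n)} (hH : H ∈ F)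
    {x : Fin n → ℕ} (hx : ∀ i ∈ H, 1 ≤ x i) {j : Fin n} (hj : j ∈ H ∨ x j = 0) {z : ℕ}
    (hlo : tetris F (H.piecewise 0 x) ≤ z)
    (hhi : z ≤ tetris F (Function.update (H.piecewise (x - 1) x) j 0)) :
    ∃ x', Move F x x' ∧ IsLong F x' ∧ tetris F x' = z :=
  hF.exists_move_of_box hH hx le_rfl (piecewise_zero_le_update hj)
    (update_le_self_iff.2 (Nat.zero_le _)) hlo hhi
    fun y _ hy => isLong_of_eq_zero (Nat.le_zero.1 (by simpa using hy j))

/-- `H` is given a size `s ∈ [t, t + a)`, `t = min (E + 1) (#P + 1 - a)` where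
`∑ i, min (x i) (z + 1) = a (z + 1) + E`, and is nested with `Q ∪ {i | z < x i}`. Then `s ≤ E + a`
keeps `tetris F (x - χ H)` at least `z`, while `s > E` or `#(P \ H) < a` leaves less than
`a (z + 1)` outside `H`. -/
theorem exists_edge_brackets (hF : MinCardSaturated F a) (hdense : CompleteLayersDense F a)
    {x : Fin n → ℕ} {z : ℕ} (hS : a * (z + 1) ≤ ∑ i, min (x i) (z + 1))
    {P Q : Finset (Fin n)} {j : Fin n} (hjP : j ∉ P) (hP1 : ∀ i ∈ P, 1 ≤ x i)
    (hPc : ∑ i ∈ Pᶜ, min (x i) (z + 1) ≤ z) (hGP : ∀ i, z < x i → i ∈ P)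
    (hQP : Q ⊆ P) (hQ : Q.card ≤ 1) :
    ∃ H ∈ F, Q ⊆ H ∧ H ⊆ P ∧
      tetris F (H.piecewise 0 x) ≤ z ∧ z ≤ tetris F (H.piecewise (x - 1) x) := by
  obtain ⟨E, hE⟩ : ∃ E, ∑ i, min (x i) (z + 1) = a * (z + 1) + E := ⟨_, (Nat.add_sub_of_le hS).symm⟩
  have hmul : a * (z + 1) = a * z + a := by ring
  have hPa : a ≤ P.card := by
    by_contra! h
    have := sum_compl_lt_of_card_sdiff_lt (empty_subset P) (by simpa using h) hPc
    rw [compl_empty] at this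
    omega
  have hPn : P.card < n := by simpa using card_lt_univ_of_notMem hjP
  obtain ⟨s, hts, hst, hsF⟩ := hdense (min (E + 1) (P.card + 1 - a)) (by omega) (by omega)
  have hQG : (Q ∪ univ.filter (z < x ·)).card + a * z ≤ ∑ i, min (x i) (z + 1) :=
    card_union_add_mul_le (fun i hi => hP1 i (hQP hi)) hS
      (by have := card_union_le Q (univ.filter (z < x ·)); omega)
  obtain ⟨H, hQH, hHP, hHs, hHG⟩ := exists_subsuperset_card_eq_union_le
    (subset_union_left : Q ⊆ Q ∪ univ.filter (z < x ·))
    (union_subset hQP fun i hi => hGP i (mem_filter.1 hi).2 : _ ⊆ P) (s := s) (by omega)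
    (by omega)
  have hx : ∀ i ∈ H, 1 ≤ x i := fun i hi => hP1 i (hHP hi)
  refine ⟨H, hsF H hHs, hQH, hHP, hF.tetris_piecewise_zero_le ?_,
    hF.le_tetris_piecewise_sub_one hx ?_⟩
  · rcases min_le_iff.1 hts with h | h
    · exact sum_compl_lt_of_lt_add_card hx (by omega)
    · exact sum_compl_lt_of_card_sdiff_lt hHP (by rw [card_sdiff_of_subset hHP]; omega) hPc
  · have := card_le_card (union_subset_union_right subset_union_right :
      H ∪ univ.filter (z < x ·) ⊆ H ∪ (Q ∪ univ.filter (z < x ·)))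
    omega

theorem exists_move_of_eq_zero (hF : MinCardSaturated F a) (hdense : CompleteLayersDense F a)
    {x : Fin n → ℕ} {z : ℕ} (hS : a * (z + 1) ≤ ∑ i, min (x i) (z + 1)) {i₀ : Fin n}
    (h₀ : x i₀ = 0) : ∃ x', Move F x x' ∧ IsLong F x' ∧ tetris F x' = z := by
  have hP : ∀ {i}, i ∈ univ.filter (0 < x ·) ↔ 0 < x i := by simp
  obtain ⟨H, hH, -, hHP, hlo, hhi⟩ := hF.exists_edge_brackets hdense hS
    (P := univ.filter (0 < x ·)) (j := i₀) (by simp [h₀]) (fun i hi => hP.1 hi)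
    (by rw [sum_eq_zero fun i hi => by simp [Nat.eq_zero_of_not_pos (hP.not.1 (mem_compl.1 hi))]]
        exact Nat.zero_le _)
    (fun i hi => hP.2 (by omega)) (empty_subset _) (by simp)
  have hi₀ : i₀ ∉ H := fun hi => by simpa [h₀] using hP.1 (hHP hi)
  refine hF.exists_move_of_zero hH (fun i hi => hP.1 (hHP hi)) (Or.inr h₀) hlo ?_
  rwa [Function.update_eq_self_iff.2 (by simp [hi₀, h₀])]

theorem exists_move_of_forall_lt (hF : MinCardSaturated F a) (hdense : CompleteLayersDense F a)
    (hn : a + 2 ≤ n) {x : Fin n → ℕ} {z : ℕ} (hS : a * (z + 1) ≤ ∑ i, min (x i) (z + 1))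
    {i₀ : Fin n} (h₀ : x i₀ ≤ z) (hbig : ∀ i ≠ i₀, z < x i) :
    ∃ x', Move F x x' ∧ IsLong F x' ∧ tetris F x' = z := by
  obtain ⟨H, hH, -, hHP, hlo, -⟩ := hF.exists_edge_brackets hdense hS
    (P := univ.erase i₀) (j := i₀) (by simp)
    (fun i hi => by have := hbig i (ne_of_mem_erase hi); omega)
    (by rw [compl_erase, compl_univ, insert_empty, sum_singleton]; omega)
    (fun i hi => mem_erase.2 ⟨by rintro rfl; omega, mem_univ _⟩) (empty_subset _) (by simp)
  obtain ⟨j, hj⟩ : H.Nonempty := card_pos.1 (hF.pos.trans_le (hF.le_card H hH))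
  have hx : ∀ i ∈ H, 1 ≤ x i := fun i hi => by
    have := hbig i (ne_of_mem_erase (hHP hi)); omega
  refine hF.exists_move_of_zero hH hx (Or.inl hj) hlo (hF.le_tetris_iff.2 ?_)
  calc a * z ≤ ((univ.erase i₀).erase j).card * z := by
        gcongr
        rw [card_erase_of_mem (hHP hj), card_erase_of_mem (mem_univ _), card_univ,
          Fintype.card_fin]
        omega
    _ ≤ _ := card_mul_le_sum_min fun i hi => by
        obtain ⟨hij, hi₀⟩ : i ≠ j ∧ i ≠ i₀ := by simp at hi; tauto
        have := hbig i hi₀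
        by_cases hiH : i ∈ H <;> simp [hij, hiH] <;> omega

theorem exists_move_of_pos (hF : MinCardSaturated F a) (hdense : CompleteLayersDense F a)
    {x : Fin n → ℕ} (hlong : IsLong F x) {z : ℕ} (hS : a * (z + 1) ≤ ∑ i, min (x i) (z + 1))
    {i₀ : Fin n} (hmin : ∀ i, x i₀ ≤ x i) (h₀ : 0 < x i₀) {j : Fin n} (hj : j ≠ i₀)
    (hjz : x j ≤ z) : ∃ x', Move F x x' ∧ IsLong F x' ∧ tetris F x' = z := by
  have hx : ∀ i, 1 ≤ x i := fun i => h₀.trans_le (hmin i)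
  obtain ⟨H, hH, hi₀H, -, hlo, hhi⟩ := hF.exists_edge_brackets hdense hS
    (P := univ.erase j) (Q := {i₀}) (j := j) (by simp) (fun i _ => hx i)
    (by rw [compl_erase, compl_univ, insert_empty, sum_singleton]; omega)
    (fun i hi => mem_erase.2 ⟨by rintro rfl; omega, mem_univ _⟩)
    (by simpa using hj.symm) (by simp)
  rw [singleton_subset_iff] at hi₀H
  by_cases hmid : z ≤ tetris F (Function.update (H.piecewise (x - 1) x) i₀ 0)
  · exact hF.exists_move_of_zero hH (fun i _ => hx i) (Or.inl hi₀H) hlo hmid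
  -- otherwise `z` is reached while only the minimal pile is being lowered
  refine hF.exists_move_of_box hH (fun i _ => hx i) (piecewise_zero_le_update (Or.inl hi₀H))
    (update_le_self_iff.2 (Nat.zero_le _)) le_rfl (not_le.1 hmid).le hhi
    fun y hly hyh => hlong.of_drop_min hF hmin ?_ fun i hi => ?_
  · have := hyh i₀
    simp only [hi₀H, piecewise_eq_of_mem, Pi.sub_apply, Pi.one_apply] at this
    omega
  · have := hly i
    by_cases hiH : i ∈ H <;> simp [hi, hiH] at this <;> omega

theorem exists_move_isLong_tetris_eq (hF : MinCardSaturated F a)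
    (hdense : CompleteLayersDense F a) (hn : a + 2 ≤ n) {x : Fin n → ℕ} (hlong : IsLong F x)
    {z : ℕ} (hz₁ : mval x ≤ z) (hz₂ : z < tetris F x) :
    ∃ x', Move F x x' ∧ IsLong F x' ∧ tetris F x' = z := by
  have : Nonempty (Fin n) := ⟨⟨0, by omega⟩⟩
  obtain ⟨i₀, hmin⟩ := Finite.exists_min x
  rw [mval_eq_of_forall_le hmin] at hz₁
  have hS := hF.le_tetris_iff.1 hz₂
  by_cases hsmall : ∃ j ≠ i₀, x j ≤ z
  · obtain ⟨j, hj, hjz⟩ := hsmall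
    rcases Nat.eq_zero_or_pos (x i₀) with h₀ | h₀
    · exact hF.exists_move_of_eq_zero hdense hS h₀
    · exact hF.exists_move_of_pos hdense hlong hS hmin h₀ hj hjz
  · exact hF.exists_move_of_forall_lt hdense hn hS hz₁ fun i hi =>
      not_le.1 fun h => hsmall ⟨i, hi, h⟩

end MinCardSaturated

end General

section Spectrum

variable {k : ℕ} {gl : ℕ → ℕ}

theorem gl_one_le (hmono : ∀ i, 1 ≤ i → i < k → gl i < gl (i + 1)) :
    ∀ {j}, 1 ≤ j → j ≤ k → gl 1 ≤ gl j
  | 0, h, _ => absurd h (by omega)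
  | 1, _, _ => le_rfl
  | j + 2, _, hj => (gl_one_le hmono (by omega) (by omega)).trans (hmono (j + 1) (by omega) hj).le

theorem exists_le_gl_lt (hgap : ∀ i, 1 ≤ i → i < k → gl (i + 1) - gl i ≤ gl 1) {t : ℕ}
    (ht : 1 ≤ t) : ∀ {j}, 1 ≤ j → j ≤ k → t ≤ gl j →
      ∃ i, 1 ≤ i ∧ i ≤ k ∧ t ≤ gl i ∧ gl i < t + gl 1
  | 0, h, _, _ => absurd h (by omega)
  | 1, _, hk, h => ⟨1, le_rfl, hk, h, by omega⟩
  | j + 2, _, hj, h => by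
    by_cases ht' : t ≤ gl (j + 1)
    · exact exists_le_gl_lt hgap ht (by omega) (by omega) ht'
    · have : gl (j + 2) - gl (j + 1) ≤ gl 1 := hgap (j + 1) (by omega) (by omega)
      exact ⟨j + 2, by omega, hj, h, by omega⟩

end Spectrum

theorem Hlambda_condition_B1_general
    (n k : ℕ) (gl : ℕ → ℕ) (hk : 1 ≤ k) (hpos : 1 < gl 1)
    (hmono : ∀ i, 1 ≤ i → i < k → gl i < gl (i + 1))
    (hgap : ∀ i, 1 ≤ i → i < k → gl (i + 1) - gl i ≤ gl 1)
    (hsum : gl 1 + gl k = n)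
    (x : Fin n → ℕ) (hlong : IsLong (Hlambda (n := n) k gl) x)
    (z : ℕ) (hz1 : mval x ≤ z) (hz2 : z < tetris (Hlambda (n := n) k gl) x) :
    ∃ x', Move (Hlambda (n := n) k gl) x x' ∧ IsLong (Hlambda (n := n) k gl) x' ∧
      tetris (Hlambda (n := n) k gl) x' = z := by
  have hF : MinCardSaturated (Hlambda (n := n) k gl) (gl 1) :=
    ⟨by omega, fun H ⟨j, hj1, hjk, hH⟩ => hH ▸ gl_one_le hmono hj1 hjk,
      fun H hH => ⟨1, le_rfl, hk, hH⟩⟩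
  have hab := gl_one_le hmono hk le_rfl
  refine hF.exists_move_isLong_tetris_eq (fun t ht htn => ?_) (by omega) hlong hz1 hz2
  obtain ⟨j, hj1, hjk, htj, hjt⟩ := exists_le_gl_lt hgap ht hk le_rfl (by omega)
  exact ⟨gl j, htj, hjt, fun H hH => ⟨j, hj1, hjk, hH⟩⟩

/-- Lemma (B1 for minimal transversal-free symmetric hypergraphs with `λ₁ > 1`). -/
theorem Hlambda_condition_B1
    (n k : ℕ) (gl : ℕ → ℕ) (hk : 1 ≤ k) (hpos : 1 < gl 1)
    (hmono : ∀ i, 1 ≤ i → i < k → gl i < gl (i + 1)) (hle : gl k ≤ n)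
    (hgap : ∀ i, 1 ≤ i → i < k → gl (i + 1) - gl i ≤ gl 1)
    (hsum : gl 1 + gl k = n)
    (x : Fin n → ℕ) (hlong : IsLong (Hlambda (n := n) k gl) x)
    (z : ℕ) (hz1 : mval x ≤ z) (hz2 : z < tetris (Hlambda (n := n) k gl) x) :
    ∃ x', Move (Hlambda (n := n) k gl) x x' ∧ IsLong (Hlambda (n := n) k gl) x' ∧
      tetris (Hlambda (n := n) k gl) x' = z :=
  Hlambda_condition_B1_general n k gl hk hpos hmono hgap hsum x hlong z hz1 hz2
end
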